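/- arXiv:1508.03912 — 4 statements merged into one kernel-verified Lean document; each statement's English description precedes it below -/
import Mathlib

section
/- Let (W,S) be a Coxeter system, I,J ⊆ S, and let w be the minimal length representative of the double coset W_I w W_J. Then the stabiliser in W_I of the coset wW_J (under left multiplication), namely W_I ∩ wW_Jw⁻¹, equals the standard parabolic subgroup W_{I ∩ wJw⁻¹}, where I ∩ wJw⁻¹ is viewed as the set {s ∈ I : s = w t w⁻¹ for some t ∈ J}. -/
/-!
Let `x ∈ W_I` with `w⁻¹ x w ∈ W_J`, and let `s ∈ I` be a left descent of `x`. Since `w` is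
minimal in `W_I w`, lengths add in `x w`, so `s` is a left descent of `x w = w y` with
`y ∈ W_J`. The strong exchange condition, applied to a reduced word for `w` followed by a word
for `y`, deletes a letter; it cannot lie in the word for `w` (minimality again), so
`w⁻¹ s w ∈ W_J`. As `w` is also minimal in `w W_J`, `1 + ℓ w = ℓ (s w) = ℓ w + ℓ (w⁻¹ s w)`,
hence `w⁻¹ s w` is a simple reflection of `J`, i.e. `s ∈ I ∩ w J w⁻¹`; induct on `ℓ x`.

The strong exchange condition itself follows from Tits' cocycle `η(w, t) ∈ ℤ/2`, which
counts the occurrences of `t` in the right inversion sequence of any word for `w`.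
-/

namespace CoxeterSystem

open scoped Classical List

variable {B W : Type*} [Group W] {M : CoxeterMatrix B} (cs : CoxeterSystem M W)

local prefix:100 "π" => cs.wordProd
local prefix:100 "ℓ" => cs.length

/-- The action of `s_i` on pairs (reflection, sign) underlying Tits' cocycle; all of `W` stands
in for the set of reflections. -/
noncomputable def reflectionFlip (i : B) : Equiv.Perm (W × ZMod 2) :=
  Function.Involutive.toPerm
    (fun p => (cs.simple i * p.1 * cs.simple i, p.2 + if p.1 = cs.simple i then 1 else 0))
    (by
      rintro ⟨x, ε⟩
      have : cs.simple i * x * cs.simple i = cs.simple i ↔ x = cs.simple i := by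
        constructor <;> intro h
        · simpa [mul_assoc] using congrArg (cs.simple i * · * cs.simple i) h
        · simp [h]
      simp only [this, add_assoc, CharTwo.add_self_eq_zero, add_zero, ← mul_assoc,
        simple_mul_simple_self, one_mul]
      simp [mul_assoc])

theorem reflectionFlip_apply (i : B) (p : W × ZMod 2) :
    cs.reflectionFlip i p =
      (cs.simple i * p.1 * cs.simple i, p.2 + if p.1 = cs.simple i then 1 else 0) := rfl

theorem reflectionFlip_mul_pow_apply (i j : B) (k : ℕ) (p : W × ZMod 2) :
    ((cs.reflectionFlip i * cs.reflectionFlip j) ^ k) p =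
      ((cs.simple i * cs.simple j) ^ k * p.1 * ((cs.simple i * cs.simple j) ^ k)⁻¹,
        p.2 + ∑ d ∈ Finset.range (2 * k),
          if p.1 = (cs.simple j * cs.simple i) ^ d * cs.simple j then 1 else 0) := by
  induction k generalizing p with
  | zero => simp
  | succ k ih =>
    rw [pow_succ, Equiv.Perm.mul_apply, ih, Equiv.Perm.mul_apply, reflectionFlip_apply,
      reflectionFlip_apply]
    set a := cs.simple i
    set b := cs.simple j
    have ha : a⁻¹ = a := cs.inv_simple i
    have hb : b⁻¹ = b := cs.inv_simple j
    have conj_eq_iff : ∀ c x y : W, c * x * c⁻¹ = y ↔ x = c⁻¹ * y * c := fun c x y => by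
      constructor <;> rintro rfl <;> group
    have shift : ∀ (d : ℕ) (x : W),
        a * (b * x * b) * a = (b * a) ^ d * b ↔ x = (b * a) ^ (d + 1 + 1) * b := by
      intro d x
      rw [show a * (b * x * b) * a = (a * b) * x * (a * b)⁻¹ by simp [ha, hb, mul_assoc],
        conj_eq_iff, mul_inv_rev, ha, hb, pow_succ, pow_succ']
      simp only [mul_assoc]
    ext
    · simp only [pow_succ, mul_inv_rev, ha, hb, mul_assoc]
    · simp only [shift, show 2 * (k + 1) = 2 * k + 1 + 1 by ring, Finset.sum_range_succ']
      have hflip : b * p.1 * b = a ↔ p.1 = b * a * b := by simpa [hb] using conj_eq_iff b p.1 a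
      simp only [zero_add, pow_one, pow_zero, one_mul, hflip]
      abel

theorem isLiftable_reflectionFlip : M.IsLiftable cs.reflectionFlip := by
  intro i j
  ext1 p
  have hperiod : ∀ d, (cs.simple j * cs.simple i) ^ (M i j + d) = (cs.simple j * cs.simple i) ^ d :=
    fun d => by rw [pow_add, simple_mul_simple_pow', one_mul]
  -- the `2 m` terms of the sum cancel in pairs `d`, `m + d`
  rw [reflectionFlip_mul_pow_apply, simple_mul_simple_pow, two_mul, Finset.sum_range_add]
  simp [hperiod, CharTwo.add_self_eq_zero]

noncomputable def reflectionRep : W →* Equiv.Perm (W × ZMod 2) :=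
  cs.lift ⟨cs.reflectionFlip, cs.isLiftable_reflectionFlip⟩

theorem reflectionRep_simple (i : B) : cs.reflectionRep (cs.simple i) = cs.reflectionFlip i :=
  cs.lift_apply_simple cs.isLiftable_reflectionFlip i

theorem reflectionRep_apply_fst (w : W) (p : W × ZMod 2) :
    (cs.reflectionRep w p).1 = w * p.1 * w⁻¹ := by
  induction w using cs.simple_induction_left generalizing p with
  | one => simp
  | mul_simple_left w i ih =>
    simp [reflectionRep_simple, reflectionFlip_apply, ih, mul_assoc]

theorem reflectionRep_apply_snd (w : W) (p : W × ZMod 2) :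
    (cs.reflectionRep w p).2 = p.2 + (cs.reflectionRep w (p.1, 0)).2 := by
  induction w using cs.simple_induction_left generalizing p with
  | one => simp
  | mul_simple_left w i ih =>
    simp only [map_mul, Equiv.Perm.mul_apply, reflectionRep_simple, reflectionFlip_apply,
      reflectionRep_apply_fst, ih p, add_assoc]

noncomputable def reflectionCocycle (w t : W) : ZMod 2 := (cs.reflectionRep w (t, 0)).2

theorem reflectionCocycle_mul (u v t : W) :
    cs.reflectionCocycle (u * v) t =
      cs.reflectionCocycle v t + cs.reflectionCocycle u (v * t * v⁻¹) := by
  rw [reflectionCocycle, map_mul, Equiv.Perm.mul_apply, reflectionRep_apply_snd,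
    reflectionRep_apply_fst, reflectionCocycle, reflectionCocycle]

theorem reflectionCocycle_one (t : W) : cs.reflectionCocycle 1 t = 0 := by
  simp [reflectionCocycle]

theorem reflectionCocycle_simple (i : B) (t : W) :
    cs.reflectionCocycle (cs.simple i) t = if t = cs.simple i then 1 else 0 := by
  simp [reflectionCocycle, reflectionRep_simple, reflectionFlip_apply]

theorem reflectionCocycle_inv (u t : W) :
    cs.reflectionCocycle u⁻¹ (u * t * u⁻¹) = cs.reflectionCocycle u t := by
  have h := cs.reflectionCocycle_mul u⁻¹ u t
  rw [inv_mul_cancel, reflectionCocycle_one, eq_comm, ← CharTwo.sub_eq_add, sub_eq_zero] at h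
  exact h.symm

theorem reflectionCocycle_self {t : W} (ht : cs.IsReflection t) :
    cs.reflectionCocycle t t = 1 := by
  obtain ⟨u, i, rfl⟩ := ht
  have hs : u⁻¹ * (u * cs.simple i * u⁻¹) * u⁻¹⁻¹ = cs.simple i := by group
  have hss : cs.simple i * cs.simple i * (cs.simple i)⁻¹ = cs.simple i := by group
  rw [reflectionCocycle_mul, reflectionCocycle_inv, hs, reflectionCocycle_mul, hss,
    reflectionCocycle_simple, if_pos rfl, add_left_comm, CharTwo.add_self_eq_zero, add_zero]

theorem reflectionCocycle_wordProd_of_notMem {ω : List B} {t : W}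
    (ht : t ∉ cs.rightInvSeq ω) : cs.reflectionCocycle (π ω) t = 0 := by
  induction ω with
  | nil => simp [reflectionCocycle_one]
  | cons i ω ih =>
    simp only [rightInvSeq, List.mem_cons, not_or] at ht
    rw [wordProd_cons, reflectionCocycle_mul, ih ht.2, reflectionCocycle_simple, if_neg, zero_add]
    intro h
    exact ht.1 (by rw [← h]; group)

theorem mem_rightInvSeq_of_isRightInversion {ω : List B} {t : W}
    (ht : cs.IsRightInversion (π ω) t) : t ∈ cs.rightInvSeq ω := by
  by_contra hω
  obtain ⟨τ, hτ, hτω⟩ := cs.exists_isReduced (π ω * t)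
  have hτt : t ∈ cs.rightInvSeq τ := by
    by_contra hτt
    have h := cs.reflectionCocycle_wordProd_of_notMem hτt
    rw [← hτω, reflectionCocycle_mul, mul_inv_cancel_right, reflectionCocycle_self cs ht.1,
      reflectionCocycle_wordProd_of_notMem cs hω, add_zero] at h
    exact one_ne_zero h
  have h := cs.isRightInversion_of_mem_rightInvSeq hτ hτt
  rw [← hτω] at h
  exact ht.1.isRightInversion_mul_left_iff.mp h ht

theorem mem_leftInvSeq_of_isLeftInversion {ω : List B} {t : W}
    (ht : cs.IsLeftInversion (π ω) t) : t ∈ cs.leftInvSeq ω := by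
  rw [← isRightInversion_inv_iff, ← wordProd_reverse] at ht
  simpa [rightInvSeq_reverse] using cs.mem_rightInvSeq_of_isRightInversion ht

theorem exists_eraseIdx_of_isLeftInversion {ω : List B} {t : W}
    (ht : cs.IsLeftInversion (π ω) t) : ∃ j < ω.length, t * π ω = π (ω.eraseIdx j) := by
  obtain ⟨j, hj, rfl⟩ := List.getElem_of_mem (cs.mem_leftInvSeq_of_isLeftInversion ht)
  refine ⟨j, by simpa using hj, ?_⟩
  rw [← getD_leftInvSeq_mul_wordProd, List.getD_eq_getElem]

theorem exists_shorter_sublist_of_not_isReduced {ω : List B} (hω : ¬cs.IsReduced ω) :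
    ∃ ω', ω' <+ ω ∧ ω'.length < ω.length ∧ π ω' = π ω := by
  induction ω with
  | nil => exact absurd (by simp [IsReduced]) hω
  | cons i ω ih =>
    by_cases hred : cs.IsReduced ω
    · have hinv : cs.IsLeftInversion (π ω) (cs.simple i) := by
        refine ⟨cs.isReflection_simple i, ?_⟩
        have := cs.length_simple_mul (π ω) i
        rw [IsReduced, wordProd_cons, List.length_cons, ← hred.eq] at hω
        omega
      obtain ⟨j, hj, h⟩ := cs.exists_eraseIdx_of_isLeftInversion hinv
      refine ⟨ω.eraseIdx j, (List.eraseIdx_sublist ω j).cons i, ?_, by rw [wordProd_cons, h]⟩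
      simp [List.length_eraseIdx_of_lt hj]
    · obtain ⟨ω', hsub, hlen, h⟩ := ih hred
      exact ⟨i :: ω', hsub.cons_cons i, by simpa using hlen,
        by rw [wordProd_cons, wordProd_cons, h]⟩

theorem exists_sublist_isReduced (ω : List B) :
    ∃ ω', ω' <+ ω ∧ cs.IsReduced ω' ∧ π ω' = π ω := by
  by_cases hω : cs.IsReduced ω
  · exact ⟨ω, List.Sublist.refl ω, hω, rfl⟩
  obtain ⟨ω₁, h₁, hlen, hprod₁⟩ := cs.exists_shorter_sublist_of_not_isReduced hω
  obtain ⟨ω₂, h₂, hred, hprod₂⟩ := exists_sublist_isReduced ω₁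
  exact ⟨ω₂, h₂.trans h₁, hred, hprod₂.trans hprod₁⟩
termination_by ω.length

theorem length_mul_lt_or_exists_eraseIdx_of_isLeftInversion_mul {ω₁ ω₂ : List B} {t : W}
    (ht : cs.IsLeftInversion (π ω₁ * π ω₂) t) :
    ℓ (t * π ω₁) < ω₁.length ∨
      ∃ j < ω₂.length, t * π ω₁ * π ω₂ = π ω₁ * π (ω₂.eraseIdx j) := by
  rw [← wordProd_append] at ht
  obtain ⟨j, hj, h⟩ := cs.exists_eraseIdx_of_isLeftInversion ht
  rw [List.length_append] at hj
  rcases lt_or_ge j ω₁.length with hj₁ | hj₁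
  · left
    rw [List.eraseIdx_append_of_lt_length hj₁, wordProd_append, wordProd_append,
      ← mul_assoc] at h
    calc ℓ (t * π ω₁) = ℓ (π (ω₁.eraseIdx j)) := by rw [mul_right_cancel h]
      _ ≤ (ω₁.eraseIdx j).length := cs.length_wordProd_le _
      _ < ω₁.length := by rw [List.length_eraseIdx_of_lt hj₁]; omega
  · right
    refine ⟨j - ω₁.length, by omega, ?_⟩
    rwa [List.eraseIdx_append_of_length_le hj₁, wordProd_append, wordProd_append,
      ← mul_assoc] at h

def parabolicSubgroup (X : Set B) : Subgroup W := Subgroup.closure (cs.simple '' X)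

variable {cs} {X : Set B}

theorem simple_mem_parabolicSubgroup {i : B} (hi : i ∈ X) :
    cs.simple i ∈ cs.parabolicSubgroup X :=
  Subgroup.subset_closure ⟨i, hi, rfl⟩

theorem wordProd_mem_parabolicSubgroup {ω : List B} (hω : ∀ i ∈ ω, i ∈ X) :
    π ω ∈ cs.parabolicSubgroup X :=
  (cs.parabolicSubgroup X).list_prod_mem <| by
    simpa using fun i hi => simple_mem_parabolicSubgroup (hω i hi)

theorem exists_word_of_mem_parabolicSubgroup {x : W} (hx : x ∈ cs.parabolicSubgroup X) :
    ∃ ω : List B, (∀ i ∈ ω, i ∈ X) ∧ π ω = x := by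
  induction hx using Subgroup.closure_induction with
  | mem _ hx =>
    obtain ⟨i, hi, rfl⟩ := hx
    exact ⟨[i], by simpa using hi, cs.wordProd_singleton i⟩
  | one => exact ⟨[], by simp, cs.wordProd_nil⟩
  | mul _ _ _ _ hx hy =>
    obtain ⟨ω₁, h₁, rfl⟩ := hx
    obtain ⟨ω₂, h₂, rfl⟩ := hy
    exact ⟨ω₁ ++ ω₂, by simpa using fun i hi => hi.elim (h₁ i) (h₂ i), cs.wordProd_append ω₁ ω₂⟩
  | inv _ _ hx =>
    obtain ⟨ω, h, rfl⟩ := hx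
    exact ⟨ω.reverse, by simpa using h, cs.wordProd_reverse ω⟩

theorem exists_isReduced_of_mem_parabolicSubgroup {x : W} (hx : x ∈ cs.parabolicSubgroup X) :
    ∃ ω : List B, cs.IsReduced ω ∧ (∀ i ∈ ω, i ∈ X) ∧ π ω = x := by
  obtain ⟨ω, hωX, rfl⟩ := exists_word_of_mem_parabolicSubgroup hx
  obtain ⟨ω', hsub, hred, hprod⟩ := cs.exists_sublist_isReduced ω
  exact ⟨ω', hred, fun i hi => hωX i (hsub.subset hi), hprod⟩

theorem exists_mem_eq_simple_of_length_eq_one {x : W} (hx : x ∈ cs.parabolicSubgroup X)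
    (hlen : ℓ x = 1) : ∃ i ∈ X, x = cs.simple i := by
  obtain ⟨ω, hred, hωX, rfl⟩ := exists_isReduced_of_mem_parabolicSubgroup hx
  obtain ⟨i, rfl⟩ := List.length_eq_one_iff.mp (hred.eq.symm.trans hlen)
  exact ⟨i, hωX i (List.mem_singleton_self i), cs.wordProd_singleton i⟩

variable (cs) in
def IsMinimalRightCosetRep (X : Set B) (w : W) : Prop :=
  ∀ z ∈ cs.parabolicSubgroup X, ℓ w ≤ ℓ (z * w)

variable (cs) in
def IsMinimalLeftCosetRep (X : Set B) (w : W) : Prop :=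
  ∀ z ∈ cs.parabolicSubgroup X, ℓ w ≤ ℓ (w * z)

theorem IsMinimalRightCosetRep.length_mul {w x : W} (hw : cs.IsMinimalRightCosetRep X w)
    (hx : x ∈ cs.parabolicSubgroup X) : ℓ (x * w) = ℓ x + ℓ w := by
  obtain ⟨ω, hω, hωX, rfl⟩ := exists_isReduced_of_mem_parabolicSubgroup hx
  rw [hω.eq]
  induction ω with
  | nil => simp
  | cons i ω ih =>
    have hω' : cs.IsReduced ω := by simpa using hω.drop 1
    have hωX' : ∀ j ∈ ω, j ∈ X := fun j hj => hωX j (List.mem_cons_of_mem i hj)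
    specialize ih hω' hωX' (wordProd_mem_parabolicSubgroup hωX')
    rw [wordProd_cons, mul_assoc, List.length_cons]
    rcases cs.length_simple_mul (π ω * w) i with hup | hdown
    · omega
    -- `s_i` must then delete a letter of `ω`, against reducedness of `i :: ω`, or of a
    -- reduced word `τ` for `w`, against minimality of `w` in `W_X w`.
    obtain ⟨τ, hτ, rfl⟩ := cs.exists_isReduced w
    have hinv : cs.IsLeftInversion (π ω * π τ) (cs.simple i) :=
      ⟨cs.isReflection_simple i, by omega⟩
    rcases cs.length_mul_lt_or_exists_eraseIdx_of_isLeftInversion_mul hinv with hlt | ⟨j, hj, h⟩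
    · have := hω.eq
      rw [wordProd_cons, List.length_cons] at this
      omega
    · have hz : (π ω)⁻¹ * cs.simple i * π ω ∈ cs.parabolicSubgroup X :=
        mul_mem (mul_mem (inv_mem (wordProd_mem_parabolicSubgroup hωX'))
          (simple_mem_parabolicSubgroup (hωX i List.mem_cons_self)))
          (wordProd_mem_parabolicSubgroup hωX')
      have hle := hw _ hz
      rw [show (π ω)⁻¹ * cs.simple i * π ω * π τ = π (τ.eraseIdx j) by
        rw [mul_assoc, mul_assoc, ← mul_assoc (cs.simple i), h]; group] at hle
      have := cs.length_wordProd_le (τ.eraseIdx j)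
      rw [List.length_eraseIdx_of_lt hj] at this
      have := hτ.eq
      omega

theorem IsMinimalLeftCosetRep.length_mul {w x : W} (hw : cs.IsMinimalLeftCosetRep X w)
    (hx : x ∈ cs.parabolicSubgroup X) : ℓ (w * x) = ℓ w + ℓ x := by
  have hw' : cs.IsMinimalRightCosetRep X w⁻¹ := fun z hz => by
    simpa [← cs.length_inv (w * z⁻¹)] using hw z⁻¹ (inv_mem hz)
  have := hw'.length_mul (inv_mem hx)
  rwa [← mul_inv_rev, cs.length_inv, cs.length_inv, cs.length_inv, add_comm] at this

section DoubleCoset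

variable {I J : Set B} {w : W}

theorem exists_simple_eq_conj_of_isLeftInversion (hI : cs.IsMinimalRightCosetRep I w)
    (hJ : cs.IsMinimalLeftCosetRep J w) {i : B} (hi : i ∈ I) {y : W}
    (hy : y ∈ cs.parabolicSubgroup J) (hinv : cs.IsLeftInversion (w * y) (cs.simple i)) :
    ∃ j ∈ J, w⁻¹ * cs.simple i * w = cs.simple j := by
  obtain ⟨τ, hτ, rfl⟩ := cs.exists_isReduced w
  obtain ⟨ρ, hρJ, rfl⟩ := exists_word_of_mem_parabolicSubgroup hy
  have hiτ : ℓ (cs.simple i * π τ) = ℓ (π τ) + 1 := by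
    have := hI _ (simple_mem_parabolicSubgroup hi)
    have := cs.length_simple_mul (π τ) i
    omega
  rcases cs.length_mul_lt_or_exists_eraseIdx_of_isLeftInversion_mul hinv with hlt | ⟨j, -, h⟩
  · have := hτ.eq
    omega
  have hconj_eq : (π τ)⁻¹ * cs.simple i * π τ = π (ρ.eraseIdx j) * (π ρ)⁻¹ :=
    calc (π τ)⁻¹ * cs.simple i * π τ = (π τ)⁻¹ * (cs.simple i * π τ * π ρ) * (π ρ)⁻¹ := by
          group
      _ = π (ρ.eraseIdx j) * (π ρ)⁻¹ := by rw [h]; group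
  have hconj : (π τ)⁻¹ * cs.simple i * π τ ∈ cs.parabolicSubgroup J := by
    rw [hconj_eq]
    exact mul_mem
      (wordProd_mem_parabolicSubgroup fun k hk => hρJ k (List.mem_of_mem_eraseIdx hk))
      (inv_mem (wordProd_mem_parabolicSubgroup hρJ))
  refine exists_mem_eq_simple_of_length_eq_one hconj ?_
  have := hJ.length_mul hconj
  rw [show π τ * ((π τ)⁻¹ * cs.simple i * π τ) = cs.simple i * π τ by group] at this
  omega

theorem mem_closure_of_mem_parabolicSubgroup_of_conj_mem (hI : cs.IsMinimalRightCosetRep I w)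
    (hJ : cs.IsMinimalLeftCosetRep J w) {x : W} (hxI : x ∈ cs.parabolicSubgroup I)
    (hxJ : w⁻¹ * x * w ∈ cs.parabolicSubgroup J) :
    x ∈ Subgroup.closure {s | s ∈ cs.simple '' I ∧ ∃ t ∈ cs.simple '' J, s = w * t * w⁻¹} := by
  obtain ⟨ω, hω, hωI, rfl⟩ := exists_isReduced_of_mem_parabolicSubgroup hxI
  induction ω with
  | nil => exact one_mem _
  | cons i ω ih =>
    have hω' : cs.IsReduced ω := by simpa using hω.drop 1
    have hωI' : ∀ j ∈ ω, j ∈ I := fun j hj => hωI j (List.mem_cons_of_mem i hj)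
    have hi : i ∈ I := hωI i List.mem_cons_self
    have hinv : cs.IsLeftInversion (w * (w⁻¹ * π (i :: ω) * w)) (cs.simple i) := by
      refine ⟨cs.isReflection_simple i, ?_⟩
      rw [show w * (w⁻¹ * π (i :: ω) * w) = π (i :: ω) * w by group, ← mul_assoc,
        wordProd_cons, ← mul_assoc, simple_mul_simple_self, one_mul, ← wordProd_cons,
        hI.length_mul hxI, hI.length_mul (wordProd_mem_parabolicSubgroup hωI'), hω.eq, hω'.eq]
      simp
    obtain ⟨j, hj, hconj⟩ := exists_simple_eq_conj_of_isLeftInversion hI hJ hi hxJ hinv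
    have hiK : cs.simple i ∈ {s | s ∈ cs.simple '' I ∧ ∃ t ∈ cs.simple '' J, s = w * t * w⁻¹} :=
      ⟨⟨i, hi, rfl⟩, cs.simple j, ⟨j, hj, rfl⟩, by rw [← hconj]; group⟩
    have hωJ : w⁻¹ * π ω * w ∈ cs.parabolicSubgroup J := by
      rw [show w⁻¹ * π ω * w = (w⁻¹ * cs.simple i * w) * (w⁻¹ * π (i :: ω) * w) by
        simp [wordProd_cons, mul_assoc], hconj]
      exact mul_mem (simple_mem_parabolicSubgroup hj) hxJ
    rw [wordProd_cons]
    exact mul_mem (Subgroup.subset_closure hiK)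
      (ih hω' hωI' (wordProd_mem_parabolicSubgroup hωI') hωJ)

end DoubleCoset

end CoxeterSystem

open CoxeterSystem

/-- equation (2) of the paper. Let `(W,S)` be a Coxeter system, `I, J ⊆ S`,
and let `w` be the minimal length representative of `W_I w W_J`. Then the stabiliser in `W_I`
of the coset `w W_J`, namely `W_I ∩ w W_J w⁻¹`, equals the standard parabolic subgroup
`W_{I ∩ w J w⁻¹}`, where `I ∩ w J w⁻¹ = {s ∈ I : s = w t w⁻¹ for some t ∈ J}`. -/
theorem statement1 {B W : Type*} [Group W] {M : CoxeterMatrix B} (cs : CoxeterSystem M W)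
    (I J : Set B) (w : W)
    (WI WJ : Subgroup W)
    (hWI : WI = Subgroup.closure (cs.simple '' I))
    (hWJ : WJ = Subgroup.closure (cs.simple '' J))
    -- `w` is the minimal length ((I,J)-reduced) representative of `W_I w W_J`
    (hw : ∀ x ∈ WI, ∀ y ∈ WJ, cs.length w ≤ cs.length (x * w * y)) :
    (WI : Set W) ∩ {x : W | w⁻¹ * x * w ∈ WJ} =
      (Subgroup.closure {s | s ∈ cs.simple '' I ∧ ∃ t ∈ cs.simple '' J, s = w * t * w⁻¹} :
        Set W) := by
  subst hWI hWJ
  change (cs.parabolicSubgroup I : Set W) ∩ {x | w⁻¹ * x * w ∈ cs.parabolicSubgroup J} = _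
  have hI : cs.IsMinimalRightCosetRep I w := fun z hz => by simpa using hw z hz 1 (one_mem _)
  have hJ : cs.IsMinimalLeftCosetRep J w := fun z hz => by simpa using hw 1 (one_mem _) z hz
  ext x
  refine ⟨fun ⟨hxI, hxJ⟩ => mem_closure_of_mem_parabolicSubgroup_of_conj_mem hI hJ hxI hxJ,
    fun hx => ?_⟩
  have hle : Subgroup.closure {s | s ∈ cs.simple '' I ∧ ∃ t ∈ cs.simple '' J, s = w * t * w⁻¹} ≤
      cs.parabolicSubgroup I ⊓ (cs.parabolicSubgroup J).comap (MulAut.conj w⁻¹).toMonoidHom := by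
    rw [Subgroup.closure_le]
    rintro _ ⟨hs, _, ⟨j, hj, rfl⟩, rfl⟩
    exact ⟨Subgroup.subset_closure hs, by simpa [mul_assoc] using simple_mem_parabolicSubgroup hj⟩
  simpa using hle hx
end

section
/- Let X be a regular locally finite building of type (W,S), I spherical, J ⊆ S, A a simplex of cotype I, and w an (I,J)-reduced element. Then the number of cotype-J simplices B with δ(A,B) = w is N(I)·q_w / N(I ∩ wJw⁻¹), where N(K) = Σ_{v∈W_K} q_v. -/
/-!
Double counting. Let `P` be the set of pairs of chambers `(x, y)` with `x ∈ A` and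
`δ(x, y) = w`. Since a sphere `{y | δ(x, y) = v}` has `q_v` elements and `A` is the union of the
spheres around `a` with radii in `W_I`, `|P| = N(I) q_w`. The map sending `(x, y)` to the
`J`-residue of `y` has image `F(A, J, w)`. Its fibre over `R` injects into `A` by the first
coordinate, because a `J`-residue contains at most one chamber at distance `w` (minimal in
`w W_J`) from a given chamber. Fixing a pair `(x₀, y₀)` of the fibre, its image is the set of
`x ∈ A` with `δ(x₀, x) ∈ W_I ∩ w W_J w⁻¹`, and by Kilmoyer's theorem this intersection is the
standard parabolic subgroup of type `I ∩ wJw⁻¹`. So every fibre has `N(I ∩ wJw⁻¹)` elements.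

The Coxeter-group facts used (deletion condition, additivity of length on minimal coset
representatives, Kilmoyer's theorem) rest on the exchange condition, which comes from Tits'
sign representation: the parity of the number of occurrences of `t` in the left inversion
sequence of a word depends only on the product of the word.
-/

open CoxeterSystem List

theorem List.Sublist.eq_append_or_eq_append_of_length_succ {α : Type*} {ψ l₁ l₂ : List α}
    (h : ψ <+ l₁ ++ l₂) (hlen : ψ.length + 1 = l₁.length + l₂.length) :
    (∃ r, r <+ l₂ ∧ r.length + 1 = l₂.length ∧ ψ = l₁ ++ r) ∨
      (∃ r, r <+ l₁ ∧ r.length + 1 = l₁.length ∧ ψ = r ++ l₂) := by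
  obtain ⟨r₁, r₂, rfl, h₁, h₂⟩ := sublist_append_iff.mp h
  rw [length_append] at hlen
  have := h₁.length_le
  have := h₂.length_le
  by_cases hr₁ : r₁.length = l₁.length
  · exact .inl ⟨r₂, h₂, by omega, by rw [h₁.eq_of_length hr₁]⟩
  · exact .inr ⟨r₁, h₁, by omega, by rw [h₂.eq_of_length_le (by omega)]⟩

theorem Set.Finite.encard_biUnion_of_encard_eq {ι α : Type*} {t : Set ι} (ht : t.Finite)
    {f : ι → Set α} (hf : t.PairwiseDisjoint f) {n : ℕ∞} (hn : ∀ i ∈ t, (f i).encard = n) :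
    (⋃ i ∈ t, f i).encard = t.encard * n := by
  rw [ht.encard_biUnion hf, finsum_mem_congr rfl hn, finsum_mem_eq_finite_toFinset_sum _ ht,
    Finset.sum_const, nsmul_eq_mul, ht.encard_eq_coe_toFinset_card]

namespace CoxeterSystem

variable {B W : Type*} [Group W] {M : CoxeterMatrix B} (cs : CoxeterSystem M W)

local prefix:100 "s" => cs.simple
local prefix:100 "π" => cs.wordProd
local prefix:100 "ℓ" => cs.length
local prefix:100 "lis" => cs.leftInvSeq

theorem simple_mul_mul_simple_eq_simple_iff {t : W} (i : B) : s i * t * s i = s i ↔ t = s i := by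
  refine ⟨fun h => ?_, fun h => by simp [h]⟩
  simpa [mul_assoc] using congrArg (s i * · * s i) h

theorem prod_map_alternatingWord_two_mul {G : Type*} [Monoid G] (f : B → G)
    (i i' : B) (k : ℕ) : ((alternatingWord i i' (2 * k)).map f).prod = (f i * f i') ^ k := by
  induction k with
  | zero => simp [alternatingWord]
  | succ k ih =>
    rw [show 2 * (k + 1) = 2 * k + 1 + 1 by ring, alternatingWord_succ', alternatingWord_succ']
    simp [ih, pow_succ', mul_assoc]

theorem wordProd_alternatingWord_add_two_mul (i i' : B) (n : ℕ) :
    π (alternatingWord i i' (n + 2 * M i i')) = π (alternatingWord i i' n) := by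
  have h : (n + 2 * M i i') / 2 = n / 2 + M i i' := by omega
  simp only [prod_alternatingWord_eq_mul_pow, h, pow_add, simple_mul_simple_pow, mul_one,
    Nat.even_add, even_two_mul, iff_true]

section SignedReflections

variable [DecidableEq W]

/-- The action of `s i` in Tits' representation of `W` on `T × {±1}`, extended to `W × {±1}`. -/
def signedReflectionPerm (i : B) : Equiv.Perm (W × ℤˣ) :=
  Function.Involutive.toPerm (fun p => (s i * p.1 * s i, if p.1 = s i then -p.2 else p.2)) <| by
    rintro ⟨t, ε⟩
    simp only [simple_mul_mul_simple_eq_simple_iff]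
    split_ifs <;> simp [mul_assoc]

theorem signedReflectionPerm_apply (i : B) (p : W × ℤˣ) :
    cs.signedReflectionPerm i p = (s i * p.1 * s i, if p.1 = s i then -p.2 else p.2) := rfl

theorem prod_map_signedReflectionPerm_apply (ω : List B) (t : W) (ε : ℤˣ) :
    (ω.map cs.signedReflectionPerm).prod (t, ε) =
      (π ω * t * (π ω)⁻¹, (-1) ^ (lis ω).count (π ω * t * (π ω)⁻¹) * ε) := by
  induction ω with
  | nil => simp
  | cons i ω ih =>
    set t' := π ω * t * (π ω)⁻¹
    have hconj : π (i :: ω) * t * (π (i :: ω))⁻¹ = s i * t' * s i := by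
      simp [t', wordProd_cons, mul_assoc]
    have hcount : (lis (i :: ω)).count (s i * t' * s i) =
        (lis ω).count t' + if t' = s i then 1 else 0 := by
      have hinj : Function.Injective (MulAut.conj (s i)) := (MulAut.conj (s i)).injective
      have : s i * t' * s i = MulAut.conj (s i) t' := by simp
      rw [leftInvSeq, count_cons, this, count_map_of_injective _ _ hinj]
      simp only [beq_iff_eq, eq_comm (a := s i), ← this, simple_mul_mul_simple_eq_simple_iff]
    simp only [map_cons, prod_cons, Equiv.Perm.mul_apply, ih, hconj, hcount]
    by_cases h : t' = s i <;> simp [signedReflectionPerm_apply, h, pow_succ]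

theorem even_count_leftInvSeq_alternatingWord (i i' : B) (t : W) :
    Even ((lis (alternatingWord i i' (2 * M i i'))).count t) := by
  set L := lis (alternatingWord i i' (2 * M i i'))
  -- `L` is periodic of period `M i i'`, so it consists of two copies of its first half.
  have hL : L = L.take (M i i') ++ L.take (M i i') := by
    refine ext_getElem (by simp [L]; omega) fun k hk _ => ?_
    rw [getElem_append]
    split_ifs with h
    · simp
    · have hk' : k < 2 * M i i' := by simpa [L] using hk
      have hm : (L.take (M i i')).length = M i i' := by simp [L]; omega
      rw [hm] at h
      simp only [hm, getElem_take, L, getElem_leftInvSeq_alternatingWord _ _ _ _ _ hk',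
        getElem_leftInvSeq_alternatingWord _ _ _ _ _ (by omega : k - M i i' < 2 * M i i')]
      rw [← cs.wordProd_alternatingWord_add_two_mul i' i (2 * (k - M i i') + 1), M.symmetric i' i]
      congr 2
      omega
  rw [hL, count_append]
  exact ⟨_, rfl⟩

theorem isLiftable_signedReflectionPerm : M.IsLiftable cs.signedReflectionPerm := by
  intro i i'
  ext ⟨t, ε⟩ : 1
  have hπ : π (alternatingWord i i' (2 * M i i')) = 1 := by
    simpa [alternatingWord] using cs.wordProd_alternatingWord_add_two_mul i i' 0
  rw [← prod_map_alternatingWord_two_mul, prod_map_signedReflectionPerm_apply, hπ]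
  simp [(cs.even_count_leftInvSeq_alternatingWord i i' t).neg_one_pow]

def signedReflectionRep : W →* Equiv.Perm (W × ℤˣ) :=
  cs.lift ⟨cs.signedReflectionPerm, cs.isLiftable_signedReflectionPerm⟩

theorem signedReflectionRep_wordProd (ω : List B) :
    cs.signedReflectionRep (π ω) = (ω.map cs.signedReflectionPerm).prod := by
  induction ω with
  | nil => simp
  | cons i ω ih => simp [signedReflectionRep, wordProd_cons, ← ih]

theorem neg_one_pow_count_leftInvSeq_eq {ω ψ : List B} (h : π ω = π ψ) (t : W) :
    (-1 : ℤˣ) ^ (lis ω).count t = (-1) ^ (lis ψ).count t := by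
  have key : (cs.signedReflectionRep (π ω) ((π ω)⁻¹ * t * π ω, 1)).2 =
      (cs.signedReflectionRep (π ψ) ((π ω)⁻¹ * t * π ω, 1)).2 := by rw [h]
  simp only [signedReflectionRep_wordProd, prod_map_signedReflectionPerm_apply] at key
  rw [← h] at key
  simpa [mul_assoc] using key

end SignedReflections

theorem simple_mem_leftInvSeq_of_isLeftDescent {ω : List B} {i : B}
    (hi : cs.IsLeftDescent (π ω) i) : s i ∈ lis ω := by
  classical
  obtain ⟨ψ, hψ, hψω⟩ := cs.exists_isReduced (s i * π ω)
  have hprod : π (i :: ψ) = π ω := by rw [wordProd_cons, ← hψω, simple_mul_simple_cancel_left]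
  have hnotmem : s i ∉ lis ψ := fun hmem => by
    have := (cs.isLeftInversion_of_mem_leftInvSeq hψ hmem).2
    rw [← hψω, simple_mul_simple_cancel_left] at this
    exact lt_asymm this hi
  have hcount : (lis (i :: ψ)).count (s i) = 1 := by
    rw [leftInvSeq, count_cons_self, count_eq_zero.mpr]
    simp only [mem_map, not_exists, not_and, MulAut.conj_apply, inv_simple,
      simple_mul_mul_simple_eq_simple_iff]
    exact fun a ha h => hnotmem (h ▸ ha)
  -- `s i` occurs exactly once in `lis (i :: ψ)`, hence an odd number of times in `lis ω`.
  have hodd := cs.neg_one_pow_count_leftInvSeq_eq hprod (s i)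
  rw [hcount, pow_one] at hodd
  by_contra hmem
  rw [count_eq_zero.mpr hmem, pow_zero] at hodd
  exact absurd hodd (by decide)

theorem exists_sublist_of_isLeftDescent {ω : List B} {i : B}
    (hi : cs.IsLeftDescent (π ω) i) :
    ∃ ψ, ψ <+ ω ∧ ψ.length + 1 = ω.length ∧ π ψ = s i * π ω := by
  obtain ⟨k, hk, hget⟩ := mem_iff_getElem.mp (cs.simple_mem_leftInvSeq_of_isLeftDescent hi)
  rw [length_leftInvSeq] at hk
  refine ⟨ω.eraseIdx k, eraseIdx_sublist _ _, length_eraseIdx_add_one hk, ?_⟩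
  rw [← getD_leftInvSeq_mul_wordProd, getD_eq_getElem _ _ (by simpa using hk), hget]

theorem exists_sublist_of_isRightDescent {ω : List B} {i : B}
    (hi : cs.IsRightDescent (π ω) i) :
    ∃ ψ, ψ <+ ω ∧ ψ.length + 1 = ω.length ∧ π ψ = π ω * s i := by
  have hi' : cs.IsLeftDescent (π ω.reverse) i := by
    rwa [wordProd_reverse, isLeftDescent_inv_iff]
  obtain ⟨ψ, hsub, hlen, hprod⟩ := cs.exists_sublist_of_isLeftDescent hi'
  refine ⟨ψ.reverse, reverse_sublist.mp (by simpa using hsub), by simpa using hlen, ?_⟩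
  rw [wordProd_reverse, hprod, wordProd_reverse, mul_inv_rev, inv_inv, inv_simple]

theorem exists_reduced_sublist (ω : List B) : ∃ ψ, ψ <+ ω ∧ cs.IsReduced ψ ∧ π ψ = π ω := by
  induction ω using reverseRecOn with
  | nil => exact ⟨[], .refl _, by simp [IsReduced], rfl⟩
  | append_singleton χ j ih =>
    obtain ⟨ψ, hsub, hψ, hprod⟩ := ih
    rw [wordProd_append, wordProd_singleton, ← hprod]
    rcases cs.length_mul_simple (π ψ) j with hup | hdown
    · refine ⟨ψ ++ [j], hsub.append (.refl _), ?_, by rw [wordProd_append, wordProd_singleton]⟩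
      rw [IsReduced, wordProd_append, wordProd_singleton, hup, hψ, length_append, length_singleton]
    · obtain ⟨ψ', hsub', hlen', hprod'⟩ :=
        cs.exists_sublist_of_isRightDescent (ω := ψ) (i := j) (by unfold IsRightDescent; omega)
      refine ⟨ψ', hsub'.trans (hsub.trans (sublist_append_left _ _)), ?_, hprod'⟩
      rw [IsReduced, hprod']
      rw [IsReduced] at hψ
      omega

def parabolic (X : Set B) : Subgroup W := Subgroup.closure (cs.simple '' X)

theorem simple_mem_parabolic {X : Set B} {i : B} (hi : i ∈ X) : s i ∈ cs.parabolic X :=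
  Subgroup.subset_closure ⟨i, hi, rfl⟩

theorem wordProd_mem_parabolic {X : Set B} {ω : List B} (hω : ∀ i ∈ ω, i ∈ X) :
    π ω ∈ cs.parabolic X := by
  induction ω with
  | nil => exact one_mem _
  | cons i ω ih =>
    rw [wordProd_cons]
    exact mul_mem (cs.simple_mem_parabolic (hω i mem_cons_self))
      (ih fun j hj => hω j (mem_cons_of_mem _ hj))

theorem parabolic_induction_right {X : Set B} {p : W → Prop} (one : p 1)
    (mul_simple : ∀ u, ∀ j ∈ X, p u → p (u * s j)) {u : W} (hu : u ∈ cs.parabolic X) : p u := by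
  induction hu using Subgroup.closure_induction_right with
  | one => exact one
  | mul_right u _ _ hy ih =>
    obtain ⟨j, hj, rfl⟩ := hy
    exact mul_simple u j hj ih
  | mul_inv_cancel u _ _ hy ih =>
    obtain ⟨j, hj, rfl⟩ := hy
    rw [inv_simple]
    exact mul_simple u j hj ih

theorem exists_reduced_word_of_mem_parabolic {X : Set B} {u : W} (hu : u ∈ cs.parabolic X) :
    ∃ ω : List B, (∀ i ∈ ω, i ∈ X) ∧ cs.IsReduced ω ∧ π ω = u := by
  obtain ⟨ω, hωX, rfl⟩ : ∃ ω : List B, (∀ i ∈ ω, i ∈ X) ∧ π ω = u := by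
    refine cs.parabolic_induction_right (p := fun u => ∃ ω : List B, (∀ i ∈ ω, i ∈ X) ∧ π ω = u)
      ⟨[], by simp, rfl⟩ ?_ hu
    rintro u j hj ⟨ω, hωX, rfl⟩
    refine ⟨ω ++ [j], fun i hi => ?_, by rw [wordProd_append, wordProd_singleton]⟩
    rcases mem_append.mp hi with hi | hi
    exacts [hωX i hi, (mem_singleton.mp hi) ▸ hj]
  obtain ⟨ψ, hsub, hψ, hprod⟩ := cs.exists_reduced_sublist ω
  exact ⟨ψ, fun i hi => hωX i (hsub.subset hi), hψ, hprod⟩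

theorem length_mul_eq_add_of_minimal {X : Set B} {u : W}
    (hu : ∀ y ∈ cs.parabolic X, ℓ u ≤ ℓ (u * y)) {y : W} (hy : y ∈ cs.parabolic X) :
    ℓ (u * y) = ℓ u + ℓ y := by
  obtain ⟨ω, hωX, hω, rfl⟩ := cs.exists_reduced_word_of_mem_parabolic hy
  clear hy
  rw [hω]
  induction ω using reverseRecOn with
  | nil => simp
  | append_singleton χ j ih =>
    have hχ : cs.IsReduced χ := by simpa using hω.take χ.length
    have hχX : ∀ i ∈ χ, i ∈ X := fun i hi => hωX i (mem_append_left _ hi)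
    have hjX : j ∈ X := hωX j (mem_append_right _ (mem_singleton_self j))
    specialize ih hχX hχ
    rw [wordProd_append, wordProd_singleton, ← mul_assoc, length_append, length_singleton]
    rcases cs.length_mul_simple (u * π χ) j with hup | hdown
    · omega
    exfalso
    obtain ⟨ωu, hωu, rfl⟩ := cs.exists_isReduced u
    obtain ⟨ψ, hsub, hlen, hprod⟩ := cs.exists_sublist_of_isRightDescent (ω := ωu ++ χ) (i := j)
      (by rw [IsRightDescent, wordProd_append]; omega)
    rw [length_append] at hlen
    -- Deleting a letter of `χ` would shorten the reduced word `χ ++ [j]`; deleting one of `ωu`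
    -- would shorten `u` by multiplying it with an element of `W_X`.
    rcases hsub.eq_append_or_eq_append_of_length_succ hlen with ⟨r, -, -, rfl⟩ | ⟨r, -, -, rfl⟩
    · rw [wordProd_append, wordProd_append, mul_assoc] at hprod
      have hr : π r = π (χ ++ [j]) := by
        rw [wordProd_append, wordProd_singleton, mul_left_cancel hprod]
      have := cs.length_wordProd_le r
      rw [hr, hω, length_append, length_singleton] at this
      simp only [length_append] at hlen
      omega
    · rw [wordProd_append, wordProd_append] at hprod
      have hr : π r = π ωu * (π χ * s j * (π χ)⁻¹) := by
        rw [← mul_assoc, ← mul_assoc, ← hprod, mul_inv_cancel_right]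
      have hmem : π χ * s j * (π χ)⁻¹ ∈ cs.parabolic X :=
        mul_mem (mul_mem (cs.wordProd_mem_parabolic hχX) (cs.simple_mem_parabolic hjX))
          (inv_mem (cs.wordProd_mem_parabolic hχX))
      have := hu _ hmem
      rw [← hr] at this
      have := cs.length_wordProd_le r
      simp only [length_append] at hlen
      rw [hωu] at *
      omega

theorem length_mul_eq_add_of_minimal' {X : Set B} {u : W}
    (hu : ∀ x ∈ cs.parabolic X, ℓ u ≤ ℓ (x * u)) {x : W} (hx : x ∈ cs.parabolic X) :
    ℓ (x * u) = ℓ x + ℓ u := by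
  have hu' : ∀ y ∈ cs.parabolic X, ℓ u⁻¹ ≤ ℓ (u⁻¹ * y) := fun y hy => by
    rw [show u⁻¹ * y = (y⁻¹ * u)⁻¹ by group, length_inv, length_inv]
    exact hu _ (inv_mem hy)
  simpa [← mul_inv_rev, length_inv, add_comm] using
    cs.length_mul_eq_add_of_minimal hu' (inv_mem hx)

theorem mem_image_simple_of_mem_parabolic {X : Set B} {t : W} (ht : t ∈ cs.parabolic X)
    (hlen : ℓ t = 1) : t ∈ cs.simple '' X := by
  obtain ⟨ω, hωX, hω, rfl⟩ := cs.exists_reduced_word_of_mem_parabolic ht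
  obtain ⟨j, rfl⟩ := List.length_eq_one_iff.mp (hω.symm.trans hlen)
  exact ⟨j, hωX j (mem_singleton_self j), (wordProd_singleton cs j).symm⟩

theorem conj_simple_mem_parabolic_of_isLeftDescent {I J : Set B} {w : W}
    (hwI : ∀ x ∈ cs.parabolic I, ℓ w ≤ ℓ (x * w))
    {v : W} (hvI : v ∈ cs.parabolic I) (hvJ : w⁻¹ * v * w ∈ cs.parabolic J)
    {i : B} (hi : i ∈ I) (hdesc : cs.IsLeftDescent v i) : w⁻¹ * s i * w ∈ cs.parabolic J := by
  have hsiI := cs.simple_mem_parabolic hi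
  obtain ⟨ωw, hωw, hωw_eq⟩ := cs.exists_isReduced w
  obtain ⟨ωy, hωyJ, -, hωy_eq⟩ := cs.exists_reduced_word_of_mem_parabolic hvJ
  have hπ : π (ωw ++ ωy) = v * w := by
    rw [wordProd_append, ← hωw_eq, hωy_eq]
    group
  have hdesc' : cs.IsLeftDescent (π (ωw ++ ωy)) i := by
    rw [hπ, IsLeftDescent, ← mul_assoc, cs.length_mul_eq_add_of_minimal' hwI (mul_mem hsiI hvI),
      cs.length_mul_eq_add_of_minimal' hwI hvI]
    exact Nat.add_lt_add_right hdesc _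
  obtain ⟨ψ, hsub, hlen, hprod⟩ := cs.exists_sublist_of_isLeftDescent hdesc'
  rw [length_append] at hlen
  rw [hπ] at hprod
  -- The exchange cannot delete a letter of `ωw`, since `s i * w` is longer than `w`.
  rcases hsub.eq_append_or_eq_append_of_length_succ hlen with ⟨r, hr, -, rfl⟩ | ⟨r, -, hrlen, rfl⟩
  · have ht : w⁻¹ * s i * w = π r * (w⁻¹ * v * w)⁻¹ := by
      rw [wordProd_append, ← hωw_eq] at hprod
      rw [eq_mul_inv_iff_mul_eq, ← inv_mul_eq_iff_eq_mul.mpr hprod.symm]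
      group
    rw [ht]
    exact mul_mem (cs.wordProd_mem_parabolic fun j hj => hωyJ j (hr.subset hj)) (inv_mem hvJ)
  · exfalso
    rw [wordProd_append, hωy_eq] at hprod
    have hr : π r = s i * w := by
      rw [← mul_inv_eq_iff_eq_mul.mpr hprod]
      group
    have := cs.length_wordProd_le r
    have := hwI _ hsiI
    have hℓw : ℓ w = ωw.length := hωw_eq ▸ hωw
    rw [hr] at *
    omega

theorem conj_simple_mem_image_of_isLeftDescent {I J : Set B} {w : W}
    (hw : ∀ x ∈ cs.parabolic I, ∀ y ∈ cs.parabolic J, ℓ w ≤ ℓ (x * w * y))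
    {v : W} (hvI : v ∈ cs.parabolic I) (hvJ : w⁻¹ * v * w ∈ cs.parabolic J)
    {i : B} (hi : i ∈ I) (hdesc : cs.IsLeftDescent v i) : w⁻¹ * s i * w ∈ cs.simple '' J := by
  have hwI : ∀ x ∈ cs.parabolic I, ℓ w ≤ ℓ (x * w) := fun x hx => by
    simpa using hw x hx 1 (one_mem _)
  have hwJ : ∀ y ∈ cs.parabolic J, ℓ w ≤ ℓ (w * y) := fun y hy => by
    simpa using hw 1 (one_mem _) y hy
  have htJ := cs.conj_simple_mem_parabolic_of_isLeftDescent hwI hvI hvJ hi hdesc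
  refine cs.mem_image_simple_of_mem_parabolic htJ ?_
  have := cs.length_mul_eq_add_of_minimal hwJ htJ
  rw [show w * (w⁻¹ * s i * w) = s i * w by group,
    cs.length_mul_eq_add_of_minimal' hwI (cs.simple_mem_parabolic hi), length_simple] at this
  omega

theorem mem_closure_of_mem_parabolic_of_conj_mem {I J : Set B} {w : W}
    (hw : ∀ x ∈ cs.parabolic I, ∀ y ∈ cs.parabolic J, ℓ w ≤ ℓ (x * w * y))
    {v : W} (hvI : v ∈ cs.parabolic I) (hvJ : w⁻¹ * v * w ∈ cs.parabolic J) :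
    v ∈ Subgroup.closure {x | x ∈ cs.simple '' I ∧ w⁻¹ * x * w ∈ cs.simple '' J} := by
  obtain ⟨ω, hωI, hω, rfl⟩ := cs.exists_reduced_word_of_mem_parabolic hvI
  induction ω with
  | nil => exact one_mem _
  | cons i χ ih =>
    have hiI : i ∈ I := hωI i mem_cons_self
    have hχI : ∀ j ∈ χ, j ∈ I := fun j hj => hωI j (mem_cons_of_mem _ hj)
    have hdesc : cs.IsLeftDescent (π (i :: χ)) i := by
      have := cs.length_wordProd_le χ
      rw [IsLeftDescent, wordProd_cons, simple_mul_simple_cancel_left, ← wordProd_cons, hω,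
        length_cons]
      omega
    have ht := cs.conj_simple_mem_image_of_isLeftDescent hw hvI hvJ hiI hdesc
    have hχJ : w⁻¹ * π χ * w ∈ cs.parabolic J := by
      have : w⁻¹ * π χ * w = (w⁻¹ * s i * w) * (w⁻¹ * π (i :: χ) * w) := by
        simp only [wordProd_cons, mul_assoc, mul_inv_cancel_left, simple_mul_simple_cancel_left]
      rw [this]
      exact mul_mem (Subgroup.subset_closure ht) hvJ
    rw [wordProd_cons]
    exact mul_mem (Subgroup.subset_closure ⟨⟨i, hiI, rfl⟩, ht⟩)
      (ih hχI (by simpa using hω.drop 1) (cs.wordProd_mem_parabolic hχI) hχJ)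

theorem coe_closure_eq_parabolic_inter_conj {I J : Set B} {w : W}
    (hw : ∀ x ∈ cs.parabolic I, ∀ y ∈ cs.parabolic J, ℓ w ≤ ℓ (x * w * y)) :
    (Subgroup.closure {x | x ∈ cs.simple '' I ∧ w⁻¹ * x * w ∈ cs.simple '' J} : Set W) =
      {v | v ∈ cs.parabolic I ∧ w⁻¹ * v * w ∈ cs.parabolic J} := by
  refine Set.Subset.antisymm (fun v hv => ?_)
    fun v hv => cs.mem_closure_of_mem_parabolic_of_conj_mem hw hv.1 hv.2
  have hle : Subgroup.closure {x | x ∈ cs.simple '' I ∧ w⁻¹ * x * w ∈ cs.simple '' J} ≤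
      cs.parabolic I ⊓ (cs.parabolic J).comap (MulAut.conj w⁻¹).toMonoidHom :=
    (Subgroup.closure_le _).mpr fun x hx => by
      have hxJ : w⁻¹ * x * w ∈ cs.parabolic J := Subgroup.subset_closure hx.2
      exact ⟨Subgroup.subset_closure hx.1, by simpa using hxJ⟩
  simpa using hle hv

section Building

variable {C : Type*}

/-- The axioms (WD1)–(WD3) of a building as a `W`-metric space, (WD2) split in two. -/
structure IsWeylDistance (δ : C → C → W) : Prop where
  eq_one_iff : ∀ c d, δ c d = 1 ↔ c = d
  swap : ∀ c d, δ d c = (δ c d)⁻¹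
  mul_simple_or_eq : ∀ c d e (i : B), δ d e = s i → δ c e = δ c d * s i ∨ δ c e = δ c d
  mul_simple_of_length : ∀ c d e (i : B), δ d e = s i →
    ℓ (δ c d * s i) = ℓ (δ c d) + 1 → δ c e = δ c d * s i
  exists_mul_simple : ∀ c d (i : B), ∃ e, δ d e = s i ∧ δ c e = δ c d * s i

/-- A simplex of cotype `X` is modelled by the `X`-residue of any of its chambers. -/
def residue (δ : C → C → W) (X : Set B) (c : C) : Set C := {d | δ c d ∈ cs.parabolic X}

/-- The generalised sphere `F(A, J, w)` of the paper. -/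
def generalizedSphere (δ : C → C → W) (J : Set B) (A : Set C) (w : W) : Set (Set C) :=
  {R | (∃ b, R = cs.residue δ J b) ∧ ∃ x ∈ A, ∃ y ∈ R, δ x y = w}

namespace IsWeylDistance

variable {cs} {δ : C → C → W}

theorem self_eq_one (hδ : cs.IsWeylDistance δ) (c : C) : δ c c = 1 := (hδ.eq_one_iff c c).mpr rfl

theorem inv_mul_mem_parabolic (hδ : cs.IsWeylDistance δ) {X : Set B} {y z : C}
    (hyz : δ y z ∈ cs.parabolic X) (x : C) : (δ x y)⁻¹ * δ x z ∈ cs.parabolic X := by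
  suffices ∀ u ∈ cs.parabolic X, ∀ z, δ y z = u → (δ x y)⁻¹ * δ x z ∈ cs.parabolic X from
    this _ hyz z rfl
  intro u hu
  refine cs.parabolic_induction_right
    (p := fun u => ∀ z, δ y z = u → (δ x y)⁻¹ * δ x z ∈ cs.parabolic X) ?_ ?_ hu
  · intro z hz
    rw [(hδ.eq_one_iff y z).mp hz, inv_mul_cancel]
    exact one_mem _
  · intro u j hj ih z hz
    obtain ⟨e, hze, hye⟩ := hδ.exists_mul_simple y z j
    have hez : δ e z = s j := by rw [hδ.swap, hze, inv_simple]
    have hxe := ih e (by rw [hye, hz, simple_mul_simple_cancel_right])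
    rcases hδ.mul_simple_or_eq x e z j hez with h | h <;> rw [h]
    · rw [← mul_assoc]
      exact mul_mem hxe (cs.simple_mem_parabolic hj)
    · exact hxe

theorem mem_parabolic_trans (hδ : cs.IsWeylDistance δ) {X : Set B} {x y z : C}
    (hxy : δ x y ∈ cs.parabolic X) (hyz : δ y z ∈ cs.parabolic X) : δ x z ∈ cs.parabolic X := by
  simpa using mul_mem hxy (hδ.inv_mul_mem_parabolic hyz x)

theorem mem_residue_self (hδ : cs.IsWeylDistance δ) (X : Set B) (c : C) :
    c ∈ cs.residue δ X c := by
  show δ c c ∈ cs.parabolic X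
  rw [hδ.self_eq_one]
  exact one_mem _

theorem residue_eq_of_mem (hδ : cs.IsWeylDistance δ) {X : Set B} {b y : C}
    (h : y ∈ cs.residue δ X b) : cs.residue δ X y = cs.residue δ X b := by
  have hyb : δ y b ∈ cs.parabolic X := by
    rw [hδ.swap]
    exact inv_mem h
  ext d
  exact ⟨hδ.mem_parabolic_trans h, hδ.mem_parabolic_trans hyb⟩

theorem eq_mul_of_length_mul_eq_add (hδ : cs.IsWeylDistance δ) {x y z : C}
    (h : ℓ (δ x y * δ y z) = ℓ (δ x y) + ℓ (δ y z)) : δ x z = δ x y * δ y z := by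
  obtain ⟨ω, hω, hωeq⟩ := cs.exists_isReduced (δ y z)
  rw [hωeq, hω] at h
  rw [hωeq]
  induction ω using reverseRecOn generalizing z with
  | nil =>
    rw [wordProd_nil] at hωeq ⊢
    rw [mul_one, (hδ.eq_one_iff y z).mp hωeq]
  | append_singleton χ j ih =>
    have hχ : cs.IsReduced χ := by simpa using hω.take χ.length
    obtain ⟨e, hze, hye⟩ := hδ.exists_mul_simple y z j
    have hez : δ e z = s j := by rw [hδ.swap, hze, inv_simple]
    rw [hωeq, wordProd_append, wordProd_singleton, simple_mul_simple_cancel_right] at hye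
    rw [wordProd_append, wordProd_singleton, ← mul_assoc, length_append, length_singleton] at h
    rw [wordProd_append, wordProd_singleton, ← mul_assoc]
    have hχlen : ℓ (δ x y * π χ) = ℓ (δ x y) + χ.length := by
      have := cs.length_mul_le (δ x y) (π χ)
      have := cs.length_mul_le (δ x y * π χ) (s j)
      rw [length_simple] at this
      rw [IsReduced] at hχ
      omega
    have hxe := ih hχlen hχ hye
    rw [← hxe] at h hχlen ⊢
    exact hδ.mul_simple_of_length x e z j hez (by omega)

theorem exists_mem_residue_eq_mul (hδ : cs.IsWeylDistance δ) {X : Set B} (x c : C) {u : W}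
    (hu : u ∈ cs.parabolic X) : ∃ d ∈ cs.residue δ X c, δ x d = δ x c * u := by
  refine cs.parabolic_induction_right (p := fun u => ∃ d ∈ cs.residue δ X c, δ x d = δ x c * u)
    ⟨c, hδ.mem_residue_self X c, (mul_one _).symm⟩ ?_ hu
  rintro u j hj ⟨d, hd, hxd⟩
  obtain ⟨e, hde, hxe⟩ := hδ.exists_mul_simple x d j
  exact ⟨e, hδ.mem_parabolic_trans hd (hde ▸ cs.simple_mem_parabolic hj),
    by rw [hxe, hxd, mul_assoc]⟩

theorem eq_of_mem_residue_of_eq (hδ : cs.IsWeylDistance δ) {X : Set B} {u : W}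
    (hu : ∀ y ∈ cs.parabolic X, ℓ u ≤ ℓ (u * y)) {x b d₁ d₂ : C}
    (h₁ : d₁ ∈ cs.residue δ X b) (h₂ : d₂ ∈ cs.residue δ X b)
    (hxd₁ : δ x d₁ = u) (hxd₂ : δ x d₂ = u) : d₁ = d₂ := by
  have h₁₂ : δ d₁ d₂ ∈ cs.parabolic X :=
    hδ.mem_parabolic_trans (by rw [hδ.swap]; exact inv_mem h₁) h₂
  have := hδ.eq_mul_of_length_mul_eq_add (x := x)
    (by rw [hxd₁]; exact cs.length_mul_eq_add_of_minimal hu h₁₂)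
  rw [hxd₁, hxd₂, left_eq_mul] at this
  exact (hδ.eq_one_iff _ _).mp this

section Counting

variable {q : B → ℕ} {Q : W → ℕ}

theorem setOf_delta_eq_mul_simple (hδ : cs.IsWeylDistance δ) (c : C) {v : W} {j : B}
    (hv : ℓ (v * s j) = ℓ v + 1) :
    {d | δ c d = v * s j} = ⋃ e ∈ {e | δ c e = v}, {d | δ e d = s j} := by
  ext d
  simp only [Set.mem_ofPred_eq, Set.mem_iUnion, exists_prop]
  constructor
  · intro hd
    obtain ⟨e, hde, hce⟩ := hδ.exists_mul_simple c d j
    exact ⟨e, by rw [hce, hd, simple_mul_simple_cancel_right], by rw [hδ.swap, hde, inv_simple]⟩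
  · rintro ⟨e, hce, hed⟩
    rw [hδ.mul_simple_of_length c e d j hed (by rw [hce, hv]), hce]

theorem pairwiseDisjoint_setOf_delta_eq_simple (hδ : cs.IsWeylDistance δ) (c : C) {v : W}
    {j : B} (hv : ℓ (v * s j) = ℓ v + 1) :
    {e | δ c e = v}.PairwiseDisjoint fun e => {d | δ e d = s j} := by
  intro e₁ he₁ e₂ he₂ hne
  refine Set.disjoint_left.mpr fun d hd₁ hd₂ => hne ?_
  have hde₂ : δ d e₂ = s j := by rw [hδ.swap, hd₂, inv_simple]
  rcases hδ.mul_simple_or_eq e₁ d e₂ j hde₂ with h | h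
  · rw [hd₁, simple_mul_simple_self] at h
    exact (hδ.eq_one_iff _ _).mp h
  · rw [hd₁] at h
    have := hδ.mul_simple_of_length c e₁ e₂ j h (by rw [he₁, hv])
    rw [he₁, he₂, left_eq_mul] at this
    simpa [this] using cs.length_simple j

theorem encard_sphere (hδ : cs.IsWeylDistance δ)
    (hq : ∀ c i, {d | δ c d = s i}.encard = q i)
    (hQ : ∀ ω, cs.IsReduced ω → Q (π ω) = (ω.map q).prod) (c : C) (v : W) :
    {d | δ c d = v}.encard = Q v := by
  obtain ⟨ω, hω, rfl⟩ := cs.exists_isReduced v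
  rw [hQ ω hω]
  induction ω using reverseRecOn with
  | nil => simp [hδ.eq_one_iff]
  | append_singleton χ j ih =>
    have hχ : cs.IsReduced χ := by simpa using hω.take χ.length
    have hv : ℓ (π χ * s j) = ℓ (π χ) + 1 := by
      have := hω.eq
      rw [wordProd_append, wordProd_singleton, length_append, length_singleton] at this
      rw [this, hχ]
    rw [wordProd_append, wordProd_singleton, hδ.setOf_delta_eq_mul_simple c hv,
      (Set.finite_of_encard_eq_coe (ih hχ)).encard_biUnion_of_encard_eq
        (hδ.pairwiseDisjoint_setOf_delta_eq_simple c hv) fun e _ => hq e j,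
      ih hχ, map_append, prod_append]
    simp

theorem encard_setOf_mem (hδ : cs.IsWeylDistance δ)
    (hq : ∀ c i, {d | δ c d = s i}.encard = q i)
    (hQ : ∀ ω, cs.IsReduced ω → Q (π ω) = (ω.map q).prod) (c : C) {V : Set W} (hV : V.Finite) :
    {d | δ c d ∈ V}.encard = ↑(∑ᶠ v ∈ V, Q v) := by
  have hU : {d | δ c d ∈ V} = ⋃ v ∈ V, {d | δ c d = v} := by
    ext
    simp
  rw [hU, hV.encard_biUnion fun v₁ _ v₂ _ hne =>
    Set.disjoint_left.mpr fun d h₁ h₂ => hne (h₁.symm.trans h₂), Nat.cast_finsum_mem hV]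
  exact finsum_mem_congr rfl fun v _ => hδ.encard_sphere hq hQ c v

theorem encard_setOf_fst_mem_delta_eq (hδ : cs.IsWeylDistance δ)
    (hq : ∀ c i, {d | δ c d = s i}.encard = q i)
    (hQ : ∀ ω, cs.IsReduced ω → Q (π ω) = (ω.map q).prod) {A : Set C} (hA : A.Finite) (w : W) :
    {p : C × C | p.1 ∈ A ∧ δ p.1 p.2 = w}.encard = A.encard * Q w := by
  have hU : {p : C × C | p.1 ∈ A ∧ δ p.1 p.2 = w} = ⋃ x ∈ A, {x} ×ˢ {d | δ x d = w} := by
    ext ⟨x, d⟩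
    simp
  rw [hU, hA.encard_biUnion_of_encard_eq
    (fun x₁ _ x₂ _ hne => Set.disjoint_left.mpr fun p h₁ h₂ => hne (h₁.1.symm.trans h₂.1))
    fun x _ => by rw [Set.encard_prod, Set.encard_singleton, one_mul,
      hδ.encard_sphere hq hQ]]

variable {I J : Set B} {w : W}

theorem image_fst_setOf_delta_eq_mem_residue (hδ : cs.IsWeylDistance δ)
    (hwI : ∀ x ∈ cs.parabolic I, ℓ w ≤ ℓ (x * w)) {x₀ d₀ : C} (h₀ : δ x₀ d₀ = w) :
    Prod.fst '' {p : C × C | (p.1 ∈ cs.residue δ I x₀ ∧ δ p.1 p.2 = w) ∧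
        p.2 ∈ cs.residue δ J d₀} =
      {x | δ x₀ x ∈ {v | v ∈ cs.parabolic I ∧ w⁻¹ * v * w ∈ cs.parabolic J}} := by
  ext x
  constructor
  · rintro ⟨⟨x, d⟩, ⟨⟨hxI, hxd⟩, hdJ⟩, rfl⟩
    have hx₀d : δ x₀ d = δ x₀ x * w := by
      rw [← hxd]
      refine hδ.eq_mul_of_length_mul_eq_add ?_
      rw [hxd]
      exact cs.length_mul_eq_add_of_minimal' hwI hxI
    have := hδ.inv_mul_mem_parabolic hdJ x₀
    rw [h₀, hx₀d, ← mul_assoc] at this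
    exact ⟨hxI, this⟩
  · rintro ⟨hxI, hxJ⟩
    have hxd₀ : δ x d₀ = (δ x₀ x)⁻¹ * w := by
      rw [← hδ.swap, ← h₀]
      refine hδ.eq_mul_of_length_mul_eq_add ?_
      rw [hδ.swap, h₀]
      exact cs.length_mul_eq_add_of_minimal' hwI (inv_mem hxI)
    obtain ⟨d, hd, hxd⟩ := hδ.exists_mem_residue_eq_mul x d₀ hxJ
    refine ⟨(x, d), ⟨⟨hxI, ?_⟩, hd⟩, rfl⟩
    rw [hxd, hxd₀]
    group

theorem encard_setOf_delta_eq_mem_residue (hδ : cs.IsWeylDistance δ)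
    (hq : ∀ c i, {d | δ c d = s i}.encard = q i)
    (hQ : ∀ ω, cs.IsReduced ω → Q (π ω) = (ω.map q).prod)
    (hI : (cs.parabolic I : Set W).Finite)
    (hw : ∀ x ∈ cs.parabolic I, ∀ y ∈ cs.parabolic J, ℓ w ≤ ℓ (x * w * y))
    {a b x₀ d₀ : C} (hx₀ : x₀ ∈ cs.residue δ I a) (hd₀ : d₀ ∈ cs.residue δ J b)
    (h₀ : δ x₀ d₀ = w) :
    {p : C × C | (p.1 ∈ cs.residue δ I a ∧ δ p.1 p.2 = w) ∧ p.2 ∈ cs.residue δ J b}.encard =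
      ↑(∑ᶠ v ∈ {v | v ∈ cs.parabolic I ∧ w⁻¹ * v * w ∈ cs.parabolic J}, Q v) := by
  have hwI : ∀ x ∈ cs.parabolic I, ℓ w ≤ ℓ (x * w) := fun x hx => by
    simpa using hw x hx 1 (one_mem _)
  have hwJ : ∀ y ∈ cs.parabolic J, ℓ w ≤ ℓ (w * y) := fun y hy => by
    simpa using hw 1 (one_mem _) y hy
  rw [← hδ.residue_eq_of_mem hx₀, ← hδ.residue_eq_of_mem hd₀]
  have hinj : Set.InjOn Prod.fst {p : C × C | (p.1 ∈ cs.residue δ I x₀ ∧ δ p.1 p.2 = w) ∧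
      p.2 ∈ cs.residue δ J d₀} := by
    rintro ⟨x, d₁⟩ ⟨⟨-, h₁⟩, hd₁⟩ ⟨x', d₂⟩ ⟨⟨-, h₂⟩, hd₂⟩ (rfl : x = x')
    exact Prod.ext rfl (hδ.eq_of_mem_residue_of_eq hwJ hd₁ hd₂ h₁ h₂)
  rw [← hinj.encard_image, hδ.image_fst_setOf_delta_eq_mem_residue hwI h₀,
    hδ.encard_setOf_mem hq hQ x₀ (hI.subset fun v hv => hv.1)]

theorem encard_generalizedSphere_mul (hδ : cs.IsWeylDistance δ)
    (hq : ∀ c i, {d | δ c d = s i}.encard = q i)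
    (hQ : ∀ ω, cs.IsReduced ω → Q (π ω) = (ω.map q).prod)
    (hI : (cs.parabolic I : Set W).Finite)
    (hw : ∀ x ∈ cs.parabolic I, ∀ y ∈ cs.parabolic J, ℓ w ≤ ℓ (x * w * y)) (a : C) :
    (cs.generalizedSphere δ J (cs.residue δ I a) w).encard *
        ↑(∑ᶠ v ∈ {v | v ∈ cs.parabolic I ∧ w⁻¹ * v * w ∈ cs.parabolic J}, Q v) =
      ↑(∑ᶠ v ∈ (cs.parabolic I : Set W), Q v) * ↑(Q w) := by
  set A := cs.residue δ I a
  set F := cs.generalizedSphere δ J A w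
  set P := {p : C × C | p.1 ∈ A ∧ δ p.1 p.2 = w}
  have hA : A.encard = ↑(∑ᶠ v ∈ (cs.parabolic I : Set W), Q v) := hδ.encard_setOf_mem hq hQ a hI
  have hP : P.encard = ↑(∑ᶠ v ∈ (cs.parabolic I : Set W), Q v) * ↑(Q w) := by
    rw [hδ.encard_setOf_fst_mem_delta_eq hq hQ (Set.finite_of_encard_eq_coe hA), hA]
  have hF : F = (fun p => cs.residue δ J p.2) '' P := by
    ext R
    constructor
    · rintro ⟨⟨b, rfl⟩, x, hx, y, hy, hxy⟩
      exact ⟨(x, y), ⟨hx, hxy⟩, hδ.residue_eq_of_mem hy⟩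
    · rintro ⟨⟨x, y⟩, ⟨hx, hxy⟩, rfl⟩
      exact ⟨⟨y, rfl⟩, x, hx, y, hδ.mem_residue_self J y, hxy⟩
  have hFfin : F.Finite := hF ▸ (Set.finite_of_encard_eq_coe (by rw [hP]; norm_cast)).image _
  have hPU : P = ⋃ R ∈ F, {p ∈ P | p.2 ∈ R} := by
    ext p
    simp only [Set.mem_iUnion, Set.mem_sep_iff, exists_prop]
    exact ⟨fun hp => ⟨_, hF ▸ ⟨p, hp, rfl⟩, hp, hδ.mem_residue_self J p.2⟩,
      fun ⟨_, _, hp, _⟩ => hp⟩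
  have hdisj : F.PairwiseDisjoint fun R => {p ∈ P | p.2 ∈ R} := by
    rintro _ ⟨⟨b₁, rfl⟩, -⟩ _ ⟨⟨b₂, rfl⟩, -⟩ hne
    exact Set.disjoint_left.mpr fun p h₁ h₂ =>
      hne ((hδ.residue_eq_of_mem h₁.2).symm.trans (hδ.residue_eq_of_mem h₂.2))
  rw [← hP, hPU, hFfin.encard_biUnion_of_encard_eq hdisj]
  rintro _ ⟨⟨b, rfl⟩, x₀, hx₀, d₀, hd₀, h₀⟩
  exact hδ.encard_setOf_delta_eq_mem_residue hq hQ hI hw hx₀ hd₀ h₀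

end Counting

end IsWeylDistance

end Building

end CoxeterSystem

open CoxeterSystem

/-- Theorem 2.1 of the paper. Let `X` be a regular locally finite
building of type `(W,S)`, `I` spherical, `J ⊆ S`, `A` a simplex of cotype `I` (realised as
the `I`-residue `{d : δ(a,d) ∈ W_I}` of a chamber `a`), and `w` an `(I,J)`-reduced element.
Then the number of cotype-`J` simplices `B` (i.e. `J`-residues) with `δ(A,B) = w` equals
`N(I) · q_w / N(I ∩ wJw⁻¹)` (stated multiplied out), where `N(K) = Σ_{v ∈ W_K} q_v`. -/
theorem statement13 {B W : Type*} [Group W] {M : CoxeterMatrix B} (cs : CoxeterSystem M W)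
    (C : Type*) (δ : C → C → W)
    -- building axioms (WD1)-(WD3)
    (hWD1 : ∀ c d : C, δ c d = 1 ↔ c = d)
    (hinv : ∀ c d : C, δ d c = (δ c d)⁻¹)
    (hWD2 : ∀ (c d e : C) (i : B), δ d e = cs.simple i →
      δ c e = δ c d * cs.simple i ∨ δ c e = δ c d)
    (hWD2' : ∀ (c d e : C) (i : B), δ d e = cs.simple i →
      cs.length (δ c d * cs.simple i) = cs.length (δ c d) + 1 →
      δ c e = δ c d * cs.simple i)
    (hWD3 : ∀ (c d : C) (i : B), ∃ e : C, δ d e = cs.simple i ∧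
      δ c e = δ c d * cs.simple i)
    -- regularity and local finiteness
    (q : B → ℕ)
    (hfin : ∀ (c : C) (i : B), {d : C | δ c d = cs.simple i}.Finite)
    (hreg : ∀ (c : C) (i : B), Nat.card {d : C | δ c d = cs.simple i} = q i)
    -- `q_w`, the product of parameters along a reduced word
    (Q : W → ℕ) (hQ : ∀ ω : List B, cs.IsReduced ω → Q (cs.wordProd ω) = (ω.map q).prod)
    (I J : Set B) (w : W)
    (WI WJ WK : Subgroup W)
    (hWI : WI = Subgroup.closure (cs.simple '' I))
    (hWJ : WJ = Subgroup.closure (cs.simple '' J))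
    -- `WK` is the standard parabolic on `I ∩ w J w⁻¹ = {s ∈ I : w⁻¹ s w ∈ J}`
    (hWK : WK = Subgroup.closure
      {s | s ∈ cs.simple '' I ∧ w⁻¹ * s * w ∈ cs.simple '' J})
    -- `I` is spherical
    (hIfin : (WI : Set W).Finite)
    -- `w` is `(I,J)`-reduced
    (hw : ∀ x ∈ WI, ∀ y ∈ WJ, cs.length w ≤ cs.length (x * w * y))
    -- a chamber `a`, and `A` the cotype-`I` simplex (the `I`-residue of `a`)
    (a : C) (A : Set C) (hA : A = {d : C | δ a d ∈ WI}) :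
    -- the generalised sphere `F(A, J, w)` of `J`-residues at Weyl distance `w` from `A`
    Nat.card {R : Set C | (∃ b : C, R = {d : C | δ b d ∈ WJ}) ∧
        ∃ x ∈ A, ∃ y ∈ R, δ x y = w} *
      (∑ᶠ v ∈ (WK : Set W), Q v) =
    (∑ᶠ v ∈ (WI : Set W), Q v) * Q w := by
  subst hWI hWJ hWK hA
  have hδ : cs.IsWeylDistance δ := ⟨hWD1, hinv, hWD2, hWD2', hWD3⟩
  have hq : ∀ c i, {d | δ c d = cs.simple i}.encard = q i := fun c i => by
    rw [← (hfin c i).cast_ncard_eq, ← Nat.card_coe_set_eq, hreg]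
  have key := hδ.encard_generalizedSphere_mul hq hQ hIfin hw a
  rw [← cs.coe_closure_eq_parabolic_inter_conj hw] at key
  have := congrArg ENat.toNat key
  rw [ENat.toNat_mul, ENat.toNat_mul, ENat.toNat_natCast, ENat.toNat_natCast,
    ENat.toNat_natCast] at this
  rwa [Nat.card_coe_set_eq, Set.ncard_def]
end

section
/- Let X be a regular locally finite building of type (W,S), let 𝒜 be an apartment, a ∈ 𝒜 a chamber, and ρ = ρ_{𝒜,a} the retraction onto 𝒜 centred at a. If Γ = (c₀, …, c_n) is a gallery in X of type (s₁,…,s_n), then ρ(Γ) is an a-pointed pregallery in 𝒜 of the same type: whenever ρ(c_{j−1}) = ρ(c_j), one has ℓ(δ(a, ρ(c_{j−1})) s_j) < ℓ(δ(a, ρ(c_{j−1}))). -/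
open CoxeterSystem

section WDistance

variable {B W C : Type*} [Group W] {M : CoxeterMatrix B} {cs : CoxeterSystem M W}
  {δ : C → C → W}

theorem length_mul_simple_lt_of_wDist_eq
    (hWD2' : ∀ (c d e : C) (i : B), δ d e = cs.simple i →
      cs.length (δ c d * cs.simple i) = cs.length (δ c d) + 1 →
      δ c e = δ c d * cs.simple i)
    {c d e : C} {i : B} (hde : δ d e = cs.simple i) (hcde : δ c d = δ c e) :
    cs.length (δ c d * cs.simple i) < cs.length (δ c d) := by
  rcases cs.length_mul_simple (δ c d) i with hlen | hlen
  · have hstep : δ c d = δ c d * cs.simple i := hcde.trans (hWD2' c d e i hde hlen)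
    have := congrArg cs.length hstep
    omega
  · omega

end WDistance

theorem statement17_general {B W : Type*} [Group W] {M : CoxeterMatrix B} (cs : CoxeterSystem M W)
    (C : Type*) (δ : C → C → W)
    -- building axioms (WD1)-(WD2)
    (hWD2' : ∀ (c d e : C) (i : B), δ d e = cs.simple i →
      cs.length (δ c d * cs.simple i) = cs.length (δ c d) + 1 →
      δ c e = δ c d * cs.simple i)
    -- a chamber `a` of `𝒜`
    (a : C)
    -- the retraction `ρ = ρ_{𝒜,a}` of `X` onto `𝒜` centred at `a`
    (ρ : C → C)
    (hρ1 : ∀ c : C, δ a (ρ c) = δ a c)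
    -- a gallery `Γ` of type `(s₁, …, s_n)` in `X`
    (n : ℕ) (ω : Fin n → B) (Γ : Fin (n + 1) → C)
    (hΓ : ∀ j : Fin n, δ (Γ j.castSucc) (Γ j.succ) = cs.simple (ω j)) :
    ∀ j : Fin n, ρ (Γ j.castSucc) = ρ (Γ j.succ) →
      cs.length (δ a (ρ (Γ j.castSucc)) * cs.simple (ω j)) <
        cs.length (δ a (ρ (Γ j.castSucc))) := by
  intro j hfold
  have hsame : δ a (Γ j.castSucc) = δ a (Γ j.succ) := by
    rw [← hρ1, hfold, hρ1]
  rw [hρ1]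
  exact length_mul_simple_lt_of_wDist_eq hWD2' (hΓ j) hsame

/-- Lemma 3.3 of the paper. Let `X` be a regular locally finite building
of type `(W,S)`, `𝒜` an apartment (realised as an isometric embedding `ι : W → C` of the
Coxeter complex), `a = ι a₀` a chamber of `𝒜`, and `ρ = ρ_{𝒜,a}` the retraction onto `𝒜`
centred at `a`. If `Γ = (c₀, …, c_n)` is a gallery in `X` of type `(s₁, …, s_n)`, then
`ρ(Γ)` is an `a`-pointed pregallery of the same type: whenever `ρ(c_{j−1}) = ρ(c_j)` one has
`ℓ(δ(a, ρ(c_{j−1})) s_j) < ℓ(δ(a, ρ(c_{j−1})))`. -/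
theorem statement17 {B W : Type*} [Group W] {M : CoxeterMatrix B} (cs : CoxeterSystem M W)
    (C : Type*) (δ : C → C → W)
    -- building axioms (WD1)-(WD2)
    (hWD1 : ∀ c d : C, δ c d = 1 ↔ c = d)
    (hinv : ∀ c d : C, δ d c = (δ c d)⁻¹)
    (hWD2 : ∀ (c d e : C) (i : B), δ d e = cs.simple i →
      δ c e = δ c d * cs.simple i ∨ δ c e = δ c d)
    (hWD2' : ∀ (c d e : C) (i : B), δ d e = cs.simple i →
      cs.length (δ c d * cs.simple i) = cs.length (δ c d) + 1 →
      δ c e = δ c d * cs.simple i)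
    -- an apartment `𝒜`, realised by `ι`
    (ι : W → C) (hι : ∀ u v : W, δ (ι u) (ι v) = u⁻¹ * v)
    -- a chamber `a` of `𝒜`
    (a₀ : W) (a : C) (ha : a = ι a₀)
    -- the retraction `ρ = ρ_{𝒜,a}` of `X` onto `𝒜` centred at `a`
    (ρ : C → C)
    (hρA : ∀ c : C, ∃ u : W, ρ c = ι u)
    (hρfix : ∀ u : W, ρ (ι u) = ι u)
    (hρ1 : ∀ c : C, δ a (ρ c) = δ a c)
    (hρgal : ∀ (c d : C) (i : B), δ c d = cs.simple i →
      ρ c = ρ d ∨ δ (ρ c) (ρ d) = cs.simple i)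
    -- a gallery `Γ` of type `(s₁, …, s_n)` in `X`
    (n : ℕ) (ω : Fin n → B) (Γ : Fin (n + 1) → C)
    (hΓ : ∀ j : Fin n, δ (Γ j.castSucc) (Γ j.succ) = cs.simple (ω j)) :
    ∀ j : Fin n, ρ (Γ j.castSucc) = ρ (Γ j.succ) →
      cs.length (δ a (ρ (Γ j.castSucc)) * cs.simple (ω j)) <
        cs.length (δ a (ρ (Γ j.castSucc))) :=
  statement17_general cs C δ hWD2' a ρ hρ1 n ω Γ hΓ
end

section
/- Let X be a thick regular building of type (W,S) with parameters (q_s), a, b chambers in a common apartment 𝒜, and ρ = ρ_{𝒜,a}. For a type v = (s₁,…,s_n) and an a-pointed pregallery γ ∈ 𝒜 of type v starting at b, the number of galleries Γ in X of type v starting at b with ρ(Γ) = γ equals q(γ) = Π_s q_s^{α_s(γ)}(q_s−1)^{σ_s(γ)}; moreover every a-pointed pregallery of type v starting at b arises as ρ(Γ) for some such gallery Γ. -/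
/-!
Lifting `γ` step by step: a gallery over `γ` starting at `c` is a chamber `d` in the
`s₁`-panel of `c` with `ρ d = γ₁`, followed by a gallery over the tail of `γ` starting at `d`,
so the number of lifts is the product of the local counts. Since `ρ` preserves `δ(a, ·)` and
`δ(a, ·)` is injective on the apartment, these are the chambers `d` of the panel with
`δ(a, d) = δ(a, γ₁)`. If `ℓ(δ(a, c) s) > ℓ(δ(a, c))` every chamber of the panel qualifies
(`q_s`); otherwise exactly one chamber `e` (the projection of `a`) has `δ(a, e) = δ(a, c) s`,
and the remaining `q_s - 1` chambers have `δ(a, d) = δ(a, c)`, which is a stutter.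
-/

open scoped Classical

open CoxeterSystem

section Galleries

variable {C W : Type*} (δ : C → C → W) (ρ : C → C)

def galleryFiber {n : ℕ} (t : Fin n → W) (γ : Fin (n + 1) → C) (c : C) :
    Set (Fin (n + 1) → C) :=
  {Γ | Γ 0 = c ∧ (∀ j : Fin n, δ (Γ j.castSucc) (Γ j.succ) = t j) ∧ ∀ j, ρ (Γ j) = γ j}

variable {δ ρ}

theorem cons_mem_galleryFiber_iff {n : ℕ} {t : Fin (n + 1) → W} {γ : Fin (n + 2) → C} {c : C}
    {Γ : Fin (n + 1) → C} :
    (Fin.cons c Γ : Fin (n + 2) → C) ∈ galleryFiber δ ρ t γ c ↔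
      ρ c = γ 0 ∧ δ c (Γ 0) = t 0 ∧ Γ ∈ galleryFiber δ ρ (Fin.tail t) (Fin.tail γ) (Γ 0) := by
  simp only [galleryFiber, Set.mem_ofPred_eq, Fin.forall_fin_succ, Fin.castSucc_zero,
    Fin.succ_zero_eq_one, Fin.castSucc_succ, Fin.cons_zero, Fin.cons_one, Fin.cons_succ,
    true_and, Fin.tail]
  tauto

theorem galleryFiber_zero {t : Fin 0 → W} {γ : Fin 1 → C} {c : C} (hc : ρ c = γ 0) :
    galleryFiber δ ρ t γ c = {fun _ ↦ c} := by
  ext Γ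
  simp only [galleryFiber, Set.mem_ofPred_eq, Set.mem_singleton_iff, IsEmpty.forall_iff,
    true_and, funext_iff]
  constructor
  · rintro ⟨h0, -⟩ j
    rwa [Fin.fin_one_eq_zero j]
  · intro h
    refine ⟨h 0, fun j ↦ ?_⟩
    rwa [Fin.fin_one_eq_zero j, h 0]

def galleryFiberEquivSigma {n : ℕ} {t : Fin (n + 1) → W} {γ : Fin (n + 2) → C} {c : C}
    (hc : ρ c = γ 0) :
    galleryFiber δ ρ t γ c ≃
      Σ d : {d | δ c d = t 0 ∧ ρ d = γ (Fin.succ 0)},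
        galleryFiber δ ρ (Fin.tail t) (Fin.tail γ) d where
  toFun := fun ⟨Γ, hΓ⟩ ↦
    have hcons : Fin.cons c (Fin.tail Γ) = Γ := by rw [← hΓ.1, Fin.cons_self_tail]
    have hΓ' := (cons_mem_galleryFiber_iff.1 (hcons ▸ hΓ)).2
    ⟨⟨Γ (Fin.succ 0), hΓ'.1, hΓ'.2.2.2 0⟩, ⟨Fin.tail Γ, hΓ'.2⟩⟩
  invFun := fun ⟨⟨d, hd⟩, ⟨Γ, hΓ⟩⟩ ↦ ⟨Fin.cons c Γ, cons_mem_galleryFiber_iff.2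
    ⟨hc, by rw [hΓ.1]; exact hd.1, by rwa [hΓ.1]⟩⟩
  left_inv := fun ⟨Γ, hΓ⟩ ↦ Subtype.ext <| by
    show Fin.cons c (Fin.tail Γ) = Γ
    rw [← hΓ.1, Fin.cons_self_tail]
  right_inv := by
    rintro ⟨⟨d, hd⟩, ⟨Γ, hΓ⟩⟩
    obtain rfl : Γ 0 = d := hΓ.1
    rfl

theorem card_galleryFiber {n : ℕ} (t : Fin n → W) (γ : Fin (n + 1) → C) (f : Fin n → ℕ)
    (hf : ∀ j, 0 < f j)
    (hstep : ∀ j c, ρ c = γ j.castSucc → Nat.card {d | δ c d = t j ∧ ρ d = γ j.succ} = f j)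
    (c : C) (hc : ρ c = γ 0) :
    Nat.card (galleryFiber δ ρ t γ c) = ∏ j, f j := by
  induction n generalizing c with
  | zero => simp [galleryFiber_zero hc]
  | succ m ih =>
    have hfirst : Nat.card {d | δ c d = t 0 ∧ ρ d = γ (Fin.succ 0)} = f 0 := hstep 0 c hc
    have hrest : ∀ d : {d | δ c d = t 0 ∧ ρ d = γ (Fin.succ 0)},
        Nat.card (galleryFiber δ ρ (Fin.tail t) (Fin.tail γ) d) = ∏ j, Fin.tail f j :=
      fun d ↦ ih (Fin.tail t) (Fin.tail γ) (Fin.tail f) (fun j ↦ hf j.succ)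
        (fun j c hc ↦ hstep j.succ c (by rw [Fin.castSucc_succ]; exact hc)) d d.2.2
    have : Fintype {d | δ c d = t 0 ∧ ρ d = γ (Fin.succ 0)} :=
      have := Nat.finite_of_card_ne_zero (hfirst ▸ (hf 0).ne'); Fintype.ofFinite _
    have : ∀ d : {d | δ c d = t 0 ∧ ρ d = γ (Fin.succ 0)},
        Finite (galleryFiber δ ρ (Fin.tail t) (Fin.tail γ) d) := fun d ↦
      Nat.finite_of_card_ne_zero ((hrest d).trans_ne
        (Finset.prod_pos fun j _ ↦ hf j.succ).ne')
    rw [Nat.card_congr (galleryFiberEquivSigma hc), Nat.card_sigma,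
      Finset.sum_congr rfl fun d _ ↦ hrest d, Finset.sum_const, Finset.card_univ,
      ← Nat.card_eq_fintype_card, hfirst, smul_eq_mul, Fin.prod_univ_succ]
    rfl

end Galleries

section Buildings

variable {B W C : Type*} [Group W] {M : CoxeterMatrix B}

/-- The axioms (WD1)–(WD3) of a `W`-metric building, with (WD2) split into its two halves. -/
structure IsWDistance (cs : CoxeterSystem M W) (δ : C → C → W) : Prop where
  eq_one_iff : ∀ c d, δ c d = 1 ↔ c = d
  mul_simple_or_eq : ∀ c d e i, δ d e = cs.simple i →
    δ c e = δ c d * cs.simple i ∨ δ c e = δ c d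
  mul_simple_of_length_eq : ∀ c d e i, δ d e = cs.simple i →
    cs.length (δ c d * cs.simple i) = cs.length (δ c d) + 1 → δ c e = δ c d * cs.simple i
  exists_mul_simple : ∀ c d i, ∃ e, δ d e = cs.simple i ∧ δ c e = δ c d * cs.simple i

theorem CoxeterSystem.simple_ne_one (cs : CoxeterSystem M W) (i : B) : cs.simple i ≠ 1 := by
  intro h
  simpa [h] using cs.length_simple i

theorem CoxeterSystem.mul_simple_ne (cs : CoxeterSystem M W) (w : W) (i : B) :
    w * cs.simple i ≠ w :=
  fun h ↦ cs.length_mul_simple_ne w i (congrArg cs.length h)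

theorem CoxeterSystem.length_mul_simple_of_lt {cs : CoxeterSystem M W} {w : W} {i : B}
    (h : cs.length (w * cs.simple i) < cs.length w) :
    cs.length (w * cs.simple i) + 1 = cs.length w :=
  (cs.length_mul_simple w i).resolve_left (by omega)

namespace IsWDistance

variable {cs : CoxeterSystem M W} {δ : C → C → W}

theorem symm_of_eq_simple (hδ : IsWDistance cs δ) {c d : C} {i : B}
    (h : δ c d = cs.simple i) : δ d c = cs.simple i := by
  have hdd : δ d d = 1 := (hδ.eq_one_iff d d).2 rfl
  rcases hδ.mul_simple_or_eq d c d i h with h' | h'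
  · rw [hdd, eq_comm, mul_eq_one_iff_eq_inv, cs.inv_simple] at h'
    exact h'
  · obtain rfl := (hδ.eq_one_iff d c).1 (h'.symm.trans hdd)
    exact absurd (h.symm.trans ((hδ.eq_one_iff d d).2 rfl)) (cs.simple_ne_one i)

/-- Within a panel, at most one chamber is strictly closer to `a` than its panel neighbours. -/
theorem eq_of_mem_panel_of_dist_eq (hδ : IsWDistance cs δ) {a c d e : C} {i : B}
    (hd : δ c d = cs.simple i) (he : δ c e = cs.simple i) (hde : δ a d = δ a e)
    (hlen : cs.length (δ a d * cs.simple i) = cs.length (δ a d) + 1) : d = e := by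
  rcases hδ.mul_simple_or_eq d c e i he with h | h
  · rwa [hδ.symm_of_eq_simple hd, cs.simple_mul_simple_self, hδ.eq_one_iff] at h
  · rw [hδ.symm_of_eq_simple hd] at h
    have := hδ.mul_simple_of_length_eq a d e i h hlen
    exact absurd (hde.trans this).symm (cs.mul_simple_ne _ i)

theorem exists_gate (hδ : IsWDistance cs δ) {a c : C} {i : B}
    (hdesc : cs.length (δ a c * cs.simple i) < cs.length (δ a c)) :
    ∃ e, δ c e = cs.simple i ∧
      ∀ d, δ c d = cs.simple i → (δ a d = δ a c * cs.simple i ↔ d = e) := by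
  obtain ⟨e, hce, hae⟩ := hδ.exists_mul_simple a c i
  refine ⟨e, hce, fun d hcd ↦ ⟨fun had ↦ ?_, fun hde ↦ hde ▸ hae⟩⟩
  refine hδ.eq_of_mem_panel_of_dist_eq hcd hce (had.trans hae.symm) ?_
  rw [had, mul_assoc, cs.simple_mul_simple_self, mul_one,
    CoxeterSystem.length_mul_simple_of_lt hdesc]

theorem card_fiber_of_length_mul_simple_eq (hδ : IsWDistance cs δ) {a c : C} {i : B}
    (hasc : cs.length (δ a c * cs.simple i) = cs.length (δ a c) + 1) :
    Nat.card {d | δ c d = cs.simple i ∧ δ a d = δ a c * cs.simple i} =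
      Nat.card {d | δ c d = cs.simple i} := by
  have : {d | δ c d = cs.simple i ∧ δ a d = δ a c * cs.simple i} = {d | δ c d = cs.simple i} :=
    Set.ext fun d ↦ and_iff_left_of_imp fun hcd ↦ hδ.mul_simple_of_length_eq a c d i hcd hasc
  rw [this]

theorem card_fiber_of_length_mul_simple_lt (hδ : IsWDistance cs δ) {a c : C} {i : B}
    (hdesc : cs.length (δ a c * cs.simple i) < cs.length (δ a c)) :
    Nat.card {d | δ c d = cs.simple i ∧ δ a d = δ a c * cs.simple i} = 1 := by
  obtain ⟨e, hce, hgate⟩ := hδ.exists_gate hdesc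
  have : {d | δ c d = cs.simple i ∧ δ a d = δ a c * cs.simple i} = {e} := by
    ext d
    exact ⟨fun ⟨hcd, had⟩ ↦ (hgate d hcd).1 had, fun hde ↦ hde ▸ ⟨hce, (hgate e hce).2 rfl⟩⟩
  rw [this, Nat.card_unique]

theorem card_fiber_self_of_length_mul_simple_lt (hδ : IsWDistance cs δ) {a c : C} {i : B}
    (hdesc : cs.length (δ a c * cs.simple i) < cs.length (δ a c)) :
    Nat.card {d | δ c d = cs.simple i ∧ δ a d = δ a c} =
      Nat.card {d | δ c d = cs.simple i} - 1 := by
  obtain ⟨e, hce, hgate⟩ := hδ.exists_gate hdesc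
  have : {d | δ c d = cs.simple i ∧ δ a d = δ a c} = {d | δ c d = cs.simple i} \ {e} := by
    ext d
    refine and_congr_right fun hcd ↦ ⟨fun had hde ↦ ?_, fun hde ↦ ?_⟩
    · exact cs.mul_simple_ne _ i (((hgate d hcd).2 hde).symm.trans had)
    · exact (hδ.mul_simple_or_eq a c d i hcd).resolve_left (mt (hgate d hcd).1 hde)
  rw [this, Nat.card_coe_set_eq, Nat.card_coe_set_eq,
    Set.ncard_sdiff_singleton_of_mem (s := {d | δ c d = cs.simple i}) hce]

end IsWDistance

end Buildings

section Apartment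

variable {W C : Type*} [Group W] {δ : C → C → W} {ι : W → C} {a : C}

theorem dist_center_apartment (hι : ∀ u v, δ (ι u) (ι v) = u⁻¹ * v) (ha : a = ι 1) (u : W) :
    δ a (ι u) = u := by
  rw [ha, hι, inv_one, one_mul]

theorem dist_center_mul_of_mem_apartment (hι : ∀ u v, δ (ι u) (ι v) = u⁻¹ * v) (ha : a = ι 1)
    {x y : C} (hx : x ∈ Set.range ι) (hy : y ∈ Set.range ι) : δ a y = δ a x * δ x y := by
  obtain ⟨u, rfl⟩ := hx
  obtain ⟨v, rfl⟩ := hy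
  rw [hι, dist_center_apartment hι ha, dist_center_apartment hι ha, mul_inv_cancel_left]

theorem retraction_eq_iff (hι : ∀ u v, δ (ι u) (ι v) = u⁻¹ * v) (ha : a = ι 1) {ρ : C → C}
    (hρA : ∀ c, ∃ u, ρ c = ι u) (hρ1 : ∀ c, δ a (ρ c) = δ a c) {x : C} (hx : x ∈ Set.range ι)
    (d : C) : ρ d = x ↔ δ a d = δ a x := by
  obtain ⟨v, rfl⟩ := hx
  obtain ⟨u, hu⟩ := hρA d
  have hinj : Function.Injective ι := fun u v h ↦ by
    rw [← dist_center_apartment hι ha u, h, dist_center_apartment hι ha]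
  rw [← hρ1 d, hu, dist_center_apartment hι ha, dist_center_apartment hι ha, hinj.eq_iff]

end Apartment

/-- The factor of `q(γ)` for a step `x → y` of type `i`: stutter, ascent or descent. -/
noncomputable def stepWeight {B W C : Type*} [Group W] {M : CoxeterMatrix B}
    (cs : CoxeterSystem M W) (δ : C → C → W) (a : C) (q : B → ℕ) (i : B) (x y : C) : ℕ :=
  if y = x then q i - 1 else if cs.length (δ a y) = cs.length (δ a x) + 1 then q i else 1

theorem stepWeight_pos {B W C : Type*} [Group W] {M : CoxeterMatrix B}
    {cs : CoxeterSystem M W} {δ : C → C → W} {a : C} {q : B → ℕ} {i : B} (hq : 2 ≤ q i)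
    (x y : C) : 0 < stepWeight cs δ a q i x y := by
  unfold stepWeight
  split_ifs <;> omega

theorem card_step_fiber {B W C : Type*} [Group W] {M : CoxeterMatrix B}
    {cs : CoxeterSystem M W} {δ : C → C → W} (hδ : IsWDistance cs δ) {q : B → ℕ}
    (hreg : ∀ c i, Nat.card {d | δ c d = cs.simple i} = q i) {ι : W → C}
    (hι : ∀ u v, δ (ι u) (ι v) = u⁻¹ * v) {a : C} (ha : a = ι 1) {ρ : C → C}
    (hρA : ∀ c, ∃ u, ρ c = ι u) (hρ1 : ∀ c, δ a (ρ c) = δ a c) {x y c : C} {i : B}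
    (hx : x ∈ Set.range ι) (hy : y ∈ Set.range ι) (hc : ρ c = x)
    (hstep : y = x ∨ δ x y = cs.simple i)
    (hstut : y = x → cs.length (δ a x * cs.simple i) < cs.length (δ a x)) :
    Nat.card {d | δ c d = cs.simple i ∧ ρ d = y} = stepWeight cs δ a q i x y := by
  unfold stepWeight
  have hca : δ a c = δ a x := (retraction_eq_iff hι ha hρA hρ1 hx c).1 hc
  simp_rw [retraction_eq_iff hι ha hρA hρ1 hy]
  rcases hstep with rfl | hxy
  · rw [if_pos rfl, ← hca, hδ.card_fiber_self_of_length_mul_simple_lt (hca ▸ hstut rfl), hreg]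
  · have hyx : y ≠ x := by
      rintro rfl
      exact cs.simple_ne_one i (hxy ▸ (hδ.eq_one_iff y y).2 rfl)
    rw [if_neg hyx, dist_center_mul_of_mem_apartment hι ha hx hy, hxy, ← hca]
    split_ifs with hasc
    · rw [hδ.card_fiber_of_length_mul_simple_eq hasc, hreg]
    · exact hδ.card_fiber_of_length_mul_simple_lt
        (by have := cs.length_mul_simple (δ a c) i; omega)

theorem statement18_general {B W : Type*} [Group W] {M : CoxeterMatrix B} (cs : CoxeterSystem M W)
    (C : Type*) (δ : C → C → W)
    -- building axioms (WD1)-(WD3)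
    (hWD1 : ∀ c d : C, δ c d = 1 ↔ c = d)
    (hWD2 : ∀ (c d e : C) (i : B), δ d e = cs.simple i →
      δ c e = δ c d * cs.simple i ∨ δ c e = δ c d)
    (hWD2' : ∀ (c d e : C) (i : B), δ d e = cs.simple i →
      cs.length (δ c d * cs.simple i) = cs.length (δ c d) + 1 →
      δ c e = δ c d * cs.simple i)
    (hWD3 : ∀ (c d : C) (i : B), ∃ e : C, δ d e = cs.simple i ∧
      δ c e = δ c d * cs.simple i)
    -- thickness, regularity and local finiteness
    (q : B → ℕ) (hthick : ∀ i : B, 2 ≤ q i)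
    (hreg : ∀ (c : C) (i : B), Nat.card {d : C | δ c d = cs.simple i} = q i)
    -- an apartment `𝒜` realised by `ι`, containing the chambers `a` and `b`
    (ι : W → C) (hι : ∀ u v : W, δ (ι u) (ι v) = u⁻¹ * v)
    (a b : C) (ha : a = ι 1)
    -- the retraction `ρ = ρ_{𝒜,a}`
    (ρ : C → C)
    (hρA : ∀ c : C, ∃ u : W, ρ c = ι u)
    (hρ1 : ∀ c : C, δ a (ρ c) = δ a c)
    -- the type `v`
    (n : ℕ) (ω : Fin n → B) :
    -- for every `a`-pointed pregallery `γ` in `𝒜` of type `ω` starting at `b` …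
    ∀ γ : Fin (n + 1) → C,
      γ 0 = b →
      (∀ j : Fin (n + 1), γ j ∈ Set.range ι) →
      (∀ j : Fin n, γ j.succ = γ j.castSucc ∨
        δ (γ j.castSucc) (γ j.succ) = cs.simple (ω j)) →
      (∀ j : Fin n, γ j.succ = γ j.castSucc →
        cs.length (δ a (γ j.castSucc) * cs.simple (ω j)) <
          cs.length (δ a (γ j.castSucc))) →
      -- … the fibre of `ρ` over `γ` has cardinality `q(γ)` and is nonempty
      (Nat.card {Γ : Fin (n + 1) → C | Γ 0 = b ∧
          (∀ j : Fin n, δ (Γ j.castSucc) (Γ j.succ) = cs.simple (ω j)) ∧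
          ∀ j : Fin (n + 1), ρ (Γ j) = γ j} =
        ∏ j : Fin n,
          (if γ j.succ = γ j.castSucc then q (ω j) - 1
           else if cs.length (δ a (γ j.succ)) = cs.length (δ a (γ j.castSucc)) + 1
             then q (ω j) else 1)) ∧
      ∃ Γ : Fin (n + 1) → C, Γ 0 = b ∧
        (∀ j : Fin n, δ (Γ j.castSucc) (Γ j.succ) = cs.simple (ω j)) ∧
        ∀ j : Fin (n + 1), ρ (Γ j) = γ j := by
  intro γ hγ0 hγA hstep hstut
  have hδ : IsWDistance cs δ := ⟨hWD1, hWD2, hWD2', hWD3⟩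
  have hρb : ρ b = γ 0 := (retraction_eq_iff hι ha hρA hρ1 (hγA 0) b).2 (by rw [hγ0])
  have hcard : Nat.card (galleryFiber δ ρ (fun j ↦ cs.simple (ω j)) γ b) =
      ∏ j, stepWeight cs δ a q (ω j) (γ j.castSucc) (γ j.succ) :=
    card_galleryFiber _ γ _ (fun j ↦ stepWeight_pos (hthick _) _ _)
      (fun j c hc ↦ card_step_fiber hδ hreg hι ha hρA hρ1 (hγA _) (hγA _) hc (hstep j) (hstut j))
      b hρb
  refine ⟨hcard, ?_⟩
  obtain ⟨Γ, hΓ⟩ := (Nat.card_pos_iff.1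
    (hcard ▸ Finset.prod_pos fun j _ ↦ stepWeight_pos (hthick _) _ _)).1
  exact ⟨Γ, hΓ⟩

/-- Proposition 3.5 of the paper. Let `X` be a thick regular building of
type `(W,S)` with parameters `(q_s)`, `a, b` chambers in a common apartment `𝒜` (realised by
an isometric embedding `ι : W → C`) and `ρ = ρ_{𝒜,a}` the retraction onto `𝒜` centred at
`a`. For a type `v = (s₁, …, s_n)` and an `a`-pointed pregallery `γ` in `𝒜` of type `v`
starting at `b`, the number of galleries `Γ` in `X` of type `v` starting at `b` with
`ρ(Γ) = γ` equals `q(γ) = Π_j (ascend: q_{s_j}; stutter: q_{s_j} − 1; descend: 1)`;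
moreover every such `γ` arises as `ρ(Γ)` for some gallery `Γ`. -/
theorem statement18 {B W : Type*} [Group W] {M : CoxeterMatrix B} (cs : CoxeterSystem M W)
    (C : Type*) (δ : C → C → W)
    -- building axioms (WD1)-(WD3)
    (hWD1 : ∀ c d : C, δ c d = 1 ↔ c = d)
    (hinv : ∀ c d : C, δ d c = (δ c d)⁻¹)
    (hWD2 : ∀ (c d e : C) (i : B), δ d e = cs.simple i →
      δ c e = δ c d * cs.simple i ∨ δ c e = δ c d)
    (hWD2' : ∀ (c d e : C) (i : B), δ d e = cs.simple i →
      cs.length (δ c d * cs.simple i) = cs.length (δ c d) + 1 →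
      δ c e = δ c d * cs.simple i)
    (hWD3 : ∀ (c d : C) (i : B), ∃ e : C, δ d e = cs.simple i ∧
      δ c e = δ c d * cs.simple i)
    -- thickness, regularity and local finiteness
    (q : B → ℕ) (hthick : ∀ i : B, 2 ≤ q i)
    (hfin : ∀ (c : C) (i : B), {d : C | δ c d = cs.simple i}.Finite)
    (hreg : ∀ (c : C) (i : B), Nat.card {d : C | δ c d = cs.simple i} = q i)
    -- an apartment `𝒜` realised by `ι`, containing the chambers `a` and `b`
    (ι : W → C) (hι : ∀ u v : W, δ (ι u) (ι v) = u⁻¹ * v)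
    (a b : C) (ha : a = ι 1) (b₀ : W) (hb : b = ι b₀)
    -- the retraction `ρ = ρ_{𝒜,a}`
    (ρ : C → C)
    (hρA : ∀ c : C, ∃ u : W, ρ c = ι u)
    (hρfix : ∀ u : W, ρ (ι u) = ι u)
    (hρ1 : ∀ c : C, δ a (ρ c) = δ a c)
    (hρgal : ∀ (c d : C) (i : B), δ c d = cs.simple i →
      ρ c = ρ d ∨ δ (ρ c) (ρ d) = cs.simple i)
    -- the type `v`
    (n : ℕ) (ω : Fin n → B) :
    -- for every `a`-pointed pregallery `γ` in `𝒜` of type `ω` starting at `b` …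
    ∀ γ : Fin (n + 1) → C,
      γ 0 = b →
      (∀ j : Fin (n + 1), γ j ∈ Set.range ι) →
      (∀ j : Fin n, γ j.succ = γ j.castSucc ∨
        δ (γ j.castSucc) (γ j.succ) = cs.simple (ω j)) →
      (∀ j : Fin n, γ j.succ = γ j.castSucc →
        cs.length (δ a (γ j.castSucc) * cs.simple (ω j)) <
          cs.length (δ a (γ j.castSucc))) →
      -- … the fibre of `ρ` over `γ` has cardinality `q(γ)` and is nonempty
      (Nat.card {Γ : Fin (n + 1) → C | Γ 0 = b ∧
          (∀ j : Fin n, δ (Γ j.castSucc) (Γ j.succ) = cs.simple (ω j)) ∧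
          ∀ j : Fin (n + 1), ρ (Γ j) = γ j} =
        ∏ j : Fin n,
          (if γ j.succ = γ j.castSucc then q (ω j) - 1
           else if cs.length (δ a (γ j.succ)) = cs.length (δ a (γ j.castSucc)) + 1
             then q (ω j) else 1)) ∧
      ∃ Γ : Fin (n + 1) → C, Γ 0 = b ∧
        (∀ j : Fin n, δ (Γ j.castSucc) (Γ j.succ) = cs.simple (ω j)) ∧
        ∀ j : Fin (n + 1), ρ (Γ j) = γ j :=
  statement18_general cs C δ hWD1 hWD2 hWD2' hWD3 q hthick hreg ι hι a b ha ρ hρA hρ1 n ω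
end
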